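/- arXiv:2303.15032 — 8 statements merged into one kernel-verified Lean document; each statement's English description precedes it below -/
import Mathlib

section
/- Let d = gcd(n,m) and suppose d = 1. Then for every integer t ≥ t_0 one has the colon ideal equality (J_{n,m}^t : w_t) = (x_1, x_2, …, x_n), the maximal graded ideal of S. -/
open MvPolynomial

/-- The `m`-path ideal of the cycle graph of length `n`, as an ideal of
`S = K[x_0, …, x_{n-1}]` (variables indexed by `ZMod n`): it is generated by the
`n` monomials `x_i x_{i+1} ⋯ x_{i+m-1}`, indices taken modulo `n`. -/
noncomputable def cyclePathIdeal (K : Type*) [Field K] (n m : ℕ) :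
    Ideal (MvPolynomial (ZMod n) K) :=
  Ideal.span { p | ∃ i : ZMod n, p = ∏ j ∈ Finset.range m, X (i + (j : ZMod n)) }

/-- The maximal graded ideal `(x_0, …, x_{n-1})` of `K[x_i : i ∈ σ]`. -/
noncomputable def maxIdeal (K : Type*) [Field K] (σ : Type*) :
    Ideal (MvPolynomial σ K) :=
  Ideal.span (Set.range (X : σ → MvPolynomial σ K))

/-!
Write `J = J_{n,m}` and `w_t` as in the statement. Since `m t₀ = α n + 1`, the `t₀` windows of
length `m` starting at `k, k + m, …, k + (t₀ - 1) m` cover the cycle `α` times and the vertex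
`k` once more, so `x_k (x_0 ⋯ x_{n-1})^α` is a product of `t₀` generators of `J` and
`x_k w_t ∈ J^t`. On the other hand `w_t` is a monomial of degree `α n + m (t - t₀) = m t - 1`,
whereas `J^t ⊆ 𝔪^{m t}` for the maximal ideal `𝔪 = (x_0, …, x_{n-1})`, so `w_t ∉ J^t`. The
colon ideal therefore contains the maximal ideal `𝔪` and is proper.
-/

theorem maxIdeal_eq_idealOfVars (K : Type*) [Field K] (σ : Type*) :
    maxIdeal K σ = idealOfVars σ K :=
  rfl

namespace MvPolynomial

variable {σ R : Type*}

theorem idealOfVars_eq_ker_constantCoeff [CommSemiring R] :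
    idealOfVars σ R = RingHom.ker (constantCoeff : MvPolynomial σ R →+* R) := by
  ext p
  rw [← pow_one (idealOfVars σ R), mem_pow_idealOfVars_iff', RingHom.mem_ker, constantCoeff_eq]
  simp only [Nat.lt_one_iff, Finsupp.degree_eq_zero_iff, forall_eq]

theorem isMaximal_idealOfVars [Field R] : (idealOfVars σ R).IsMaximal := by
  rw [idealOfVars_eq_ker_constantCoeff]
  exact RingHom.ker_isMaximal_of_surjective _ fun r => ⟨C r, constantCoeff_C σ r⟩

theorem IsHomogeneous.notMem_pow_idealOfVars [CommSemiring R] {p : MvPolynomial σ R} {D k : ℕ}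
    (hp : p.IsHomogeneous D) (hp0 : p ≠ 0) (hDk : D < k) : p ∉ idealOfVars σ R ^ k := by
  intro hpk
  obtain ⟨d, hd⟩ := exists_coeff_ne_zero hp0
  apply hd
  by_cases hdD : d.degree = D
  · exact (mem_pow_idealOfVars_iff' k p).1 hpk d (hdD ▸ hDk)
  · exact hp.coeff_eq_zero hdD

end MvPolynomial

section consecutiveProd

variable {M : Type*} [CommMonoid M] {n : ℕ}

def consecutiveProd (f : ZMod n → M) (k : ZMod n) (l : ℕ) : M :=
  ∏ j ∈ Finset.range l, f (k + j)

variable (f : ZMod n → M)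

theorem consecutiveProd_add (k : ZMod n) (a b : ℕ) :
    consecutiveProd f k (a + b) = consecutiveProd f k a * consecutiveProd f (k + a) b := by
  simp only [consecutiveProd, Finset.prod_range_add, Nat.cast_add, add_assoc]

theorem prod_consecutiveProd (k : ZMod n) (a b : ℕ) :
    ∏ j ∈ Finset.range a, consecutiveProd f (k + (j * b : ℕ)) b = consecutiveProd f k (a * b) := by
  induction a with
  | zero => simp [consecutiveProd]
  | succ a ih => rw [Finset.prod_range_succ, ih, Nat.succ_mul, consecutiveProd_add]

theorem consecutiveProd_self [NeZero n] (k : ZMod n) :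
    consecutiveProd f k n = ∏ i, f i := by
  rw [← Fintype.prod_equiv (Equiv.addLeft k) (fun i => f (k + i)) f fun _ => rfl]
  refine Finset.prod_nbij' (fun j => (j : ZMod n)) ZMod.val (by simp) (by simp [ZMod.val_lt])
    (fun j hj => ZMod.val_natCast_of_lt (Finset.mem_range.mp hj))
    (fun i _ => ZMod.natCast_zmod_val i) (fun _ _ => rfl)

theorem consecutiveProd_mul_add [NeZero n] (k : ZMod n) (c r : ℕ) :
    consecutiveProd f k (c * n + r) = (∏ i, f i) ^ c * consecutiveProd f k r := by
  induction c with
  | zero => simp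
  | succ c ih =>
    rw [Nat.succ_mul, add_comm (c * n), add_assoc, consecutiveProd_add, ZMod.natCast_self,
      add_zero, ih, consecutiveProd_self, pow_succ', mul_assoc]

end consecutiveProd

theorem mul_prod_pow_eq_prod_consecutiveProd {M : Type*} [CommMonoid M] {n : ℕ} [NeZero n]
    (f : ZMod n → M) {m t₀ α : ℕ} (h : m * t₀ = α * n + 1) (k : ZMod n) :
    f k * (∏ i, f i) ^ α = ∏ j ∈ Finset.range t₀, consecutiveProd f (k + (j * m : ℕ)) m := by
  rw [prod_consecutiveProd, mul_comm t₀, h, consecutiveProd_mul_add, mul_comm]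
  simp [consecutiveProd]

section cyclePathIdeal

variable {K : Type*} [Field K] {n m : ℕ}

theorem consecutiveProd_X_mem_cyclePathIdeal (i : ZMod n) :
    consecutiveProd X i m ∈ cyclePathIdeal K n m :=
  Ideal.subset_span ⟨i, rfl⟩

theorem isHomogeneous_consecutiveProd_X (i : ZMod n) (l : ℕ) :
    (consecutiveProd X i l : MvPolynomial (ZMod n) K).IsHomogeneous l := by
  simpa [consecutiveProd] using IsHomogeneous.prod (Finset.range l)
    (fun j : ℕ => (X (i + j) : MvPolynomial (ZMod n) K)) (fun _ => 1)
    fun j _ => isHomogeneous_X K _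

theorem consecutiveProd_X_ne_zero (i : ZMod n) (l : ℕ) :
    (consecutiveProd X i l : MvPolynomial (ZMod n) K) ≠ 0 :=
  Finset.prod_ne_zero_iff.mpr fun _ _ => X_ne_zero _

theorem cyclePathIdeal_le_pow_idealOfVars :
    cyclePathIdeal K n m ≤ idealOfVars (ZMod n) K ^ m := by
  rw [cyclePathIdeal, Ideal.span_le]
  rintro - ⟨i, rfl⟩
  simpa using Ideal.prod_mem_prod (s := Finset.range m) (I := fun _ => idealOfVars (ZMod n) K)
    fun j _ => Ideal.subset_span ⟨i + j, rfl⟩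

variable {t₀ α t : ℕ}

theorem X_mul_mem_pow_cyclePathIdeal [NeZero n] (h : m * t₀ = α * n + 1) (ht : t₀ ≤ t)
    (k : ZMod n) :
    X k * (consecutiveProd X 0 n ^ α * consecutiveProd X 0 m ^ (t - t₀)) ∈
      cyclePathIdeal K n m ^ t := by
  rw [← mul_assoc, consecutiveProd_self, mul_prod_pow_eq_prod_consecutiveProd X h k,
    ← Nat.add_sub_cancel' ht, pow_add, Nat.add_sub_cancel_left]
  refine Ideal.mul_mem_mul ?_ (Ideal.pow_mem_pow (consecutiveProd_X_mem_cyclePathIdeal 0) _)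
  simpa using Ideal.prod_mem_prod (s := Finset.range t₀) (I := fun _ => cyclePathIdeal K n m)
    fun j _ => consecutiveProd_X_mem_cyclePathIdeal _

theorem notMem_pow_cyclePathIdeal (h : m * t₀ = α * n + 1) (ht : t₀ ≤ t) :
    (consecutiveProd X 0 n ^ α * consecutiveProd X 0 m ^ (t - t₀) : MvPolynomial (ZMod n) K) ∉
      cyclePathIdeal K n m ^ t := by
  intro hw
  have hmem := pow_mul (idealOfVars (ZMod n) K) m t ▸
    Ideal.pow_right_mono cyclePathIdeal_le_pow_idealOfVars t hw
  have hdeg : n * α + m * (t - t₀) < m * t := by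
    have hmt : m * t = m * t₀ + m * (t - t₀) := by rw [← mul_add, Nat.add_sub_cancel' ht]
    rw [hmt, h]
    linarith [mul_comm n α]
  exact IsHomogeneous.notMem_pow_idealOfVars
    (((isHomogeneous_consecutiveProd_X 0 n).pow α).mul
      ((isHomogeneous_consecutiveProd_X 0 m).pow _))
    (mul_ne_zero (pow_ne_zero _ (consecutiveProd_X_ne_zero 0 n))
      (pow_ne_zero _ (consecutiveProd_X_ne_zero 0 m))) hdeg hmem

end cyclePathIdeal

theorem colon_wt_eq_maxIdeal_of_gcd_eq_one_general
    (K : Type*) [Field K] (n m : ℕ) (hmn : m < n)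
    (hd : Nat.gcd n m = 1) (t0 α : ℕ)
    (ht0 : m * t0 = α * n + Nat.gcd n m)
    (t : ℕ) (ht : t0 ≤ t) :
    ((cyclePathIdeal K n m) ^ t).colon
      (Ideal.span {((∏ j ∈ Finset.range n, X ((j : ℕ) : ZMod n)) ^ α *
        (∏ j ∈ Finset.range m, X ((j : ℕ) : ZMod n)) ^ (t - t0) : MvPolynomial (ZMod n) K)})
      = maxIdeal K (ZMod n) := by
  have : NeZero n := ⟨by omega⟩
  rw [hd] at ht0
  have hprod (l : ℕ) : ∏ j ∈ Finset.range l, (X (j : ZMod n) : MvPolynomial (ZMod n) K) =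
      consecutiveProd X 0 l := by
    simp only [consecutiveProd, zero_add]
  rw [hprod, hprod, maxIdeal_eq_idealOfVars]
  refine (isMaximal_idealOfVars.eq_of_le ?_ ?_).symm
  · rw [Ne, Ideal.eq_top_iff_one, Ideal.mem_colon_span_singleton, one_mul]
    exact notMem_pow_cyclePathIdeal ht0 ht
  · rw [idealOfVars, Ideal.span_le]
    rintro - ⟨k, rfl⟩
    exact Ideal.mem_colon_span_singleton.mpr (X_mul_mem_pow_cyclePathIdeal ht0 ht k)

/-- If `d = gcd(n,m) = 1`, then for every `t ≥ t₀` one has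
`(J_{n,m}^t : w_t) = (x_1, …, x_n)`, where `w_t = (x_1⋯x_n)^α (x_1⋯x_m)^{t-t₀}`. -/
theorem colon_wt_eq_maxIdeal_of_gcd_eq_one
    (K : Type*) [Field K] (n m : ℕ) (hm : 2 ≤ m) (hmn : m < n)
    (hd : Nat.gcd n m = 1) (t0 α : ℕ) (hα : 0 < α) (ht0le : t0 ≤ n - 1)
    (ht0 : m * t0 = α * n + Nat.gcd n m)
    (ht0max : ∀ s : ℕ, s ≤ n - 1 → (∃ β : ℕ, 0 < β ∧ m * s = β * n + Nat.gcd n m) → s ≤ t0)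
    (t : ℕ) (ht : t0 ≤ t) :
    ((cyclePathIdeal K n m) ^ t).colon
      (Ideal.span {((∏ j ∈ Finset.range n, X ((j : ℕ) : ZMod n)) ^ α *
        (∏ j ∈ Finset.range m, X ((j : ℕ) : ZMod n)) ^ (t - t0) : MvPolynomial (ZMod n) K)})
      = maxIdeal K (ZMod n) :=
  colon_wt_eq_maxIdeal_of_gcd_eq_one_general K n m hmn hd t0 α ht0 t ht
end

section
/- Let d = gcd(n,m) and suppose d > 1. Then for every integer t ≥ t_0 one has the colon ideal equality (J_{n,m}^t : w_t) = U_{n,d}. -/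
open MvPolynomial

/-!
Both sides are monomial ideals, so it suffices to compare monomials `x^e`: `x^e` lies in the
colon ideal iff some product of `t` path monomials divides `x^e w_t`.

Since `d` divides `n` and `m`, every path monomial has exactly `m / d` variables in each residue
class modulo `d`. If `x^e` misses a class, comparing degrees in that class on both sides gives
`t₀ m ≤ α n`, against `m t₀ = α n + d`.

Conversely, pick a variable `x_{κ j}` of `x^e` in every class `j`. The multiples of `m` modulo
`n` are exactly the multiples of `d`, so a chain of fewer than `n / d` consecutive paths starts at
`κ j` and ends at `κ (j - 1)`. Together these chains go around the cycle some `c` times and cover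
each `κ j` once more, so their product is `(x_0 ⋯ x_{n-1})^c ∏ x_{κ j}`. Maximality of `t₀` bounds
the number of paths by `t₀`, and padding with full turns gives `∏ x_{κ j} · w_{t₀} ∈ J^{t₀}`.
-/

open Finset

section WeightGeIdeal

variable {σ R : Type*} [CommSemiring R]

variable (R) in
noncomputable def weightGeIdeal (w : σ → ℕ) (k : ℕ) : Ideal (MvPolynomial σ R) :=
  Ideal.span ((fun s => monomial s 1) '' {s | k ≤ Finsupp.weight w s})

theorem mem_weightGeIdeal_iff {w : σ → ℕ} {k : ℕ} {p : MvPolynomial σ R} :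
    p ∈ weightGeIdeal R w k ↔ ∀ s ∈ p.support, k ≤ Finsupp.weight w s := by
  rw [weightGeIdeal, mem_ideal_span_monomial_image]
  refine forall₂_congr fun s _ => ⟨?_, fun hs => ⟨s, hs, le_rfl⟩⟩
  rintro ⟨s', hs', hle⟩
  obtain ⟨u, rfl⟩ := exists_add_of_le hle
  exact hs'.trans (by simp)

theorem monomial_mem_weightGeIdeal {w : σ → ℕ} {k : ℕ} {s : σ →₀ ℕ}
    (hs : k ≤ Finsupp.weight w s) (c : R) : monomial s c ∈ weightGeIdeal R w k := by
  classical
  rw [mem_weightGeIdeal_iff]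
  intro s' hs'
  rwa [Finset.mem_singleton.mp (support_monomial_subset hs')]

theorem weightGeIdeal_mul_le (w : σ → ℕ) (a b : ℕ) :
    weightGeIdeal R w a * weightGeIdeal R w b ≤ weightGeIdeal R w (a + b) := by
  classical
  refine Ideal.mul_le.mpr fun p hp q hq => mem_weightGeIdeal_iff.mpr fun s hs => ?_
  obtain ⟨s₁, hs₁, s₂, hs₂, rfl⟩ := Finset.mem_add.mp (support_mul p q hs)
  rw [map_add]
  exact add_le_add (mem_weightGeIdeal_iff.mp hp s₁ hs₁) (mem_weightGeIdeal_iff.mp hq s₂ hs₂)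

theorem pow_le_weightGeIdeal {I : Ideal (MvPolynomial σ R)} {w : σ → ℕ} {a : ℕ}
    (h : I ≤ weightGeIdeal R w a) (t : ℕ) : I ^ t ≤ weightGeIdeal R w (t * a) := by
  induction t with
  | zero =>
    rw [pow_zero, zero_mul, Ideal.one_eq_top, top_le_iff, Ideal.eq_top_iff_one, ← C_1,
      ← monomial_zero']
    exact monomial_mem_weightGeIdeal (Nat.zero_le _) 1
  | succ t ih =>
    rw [pow_succ, add_mul, one_mul]
    exact (Ideal.mul_mono ih h).trans (weightGeIdeal_mul_le w _ _)

theorem le_weight_add_of_mul_monomial_mem {w : σ → ℕ} {k : ℕ} {p : MvPolynomial σ R}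
    {u s : σ →₀ ℕ} (h : p * monomial u 1 ∈ weightGeIdeal R w k) (hs : s ∈ p.support) :
    k ≤ Finsupp.weight w s + Finsupp.weight w u := by
  rw [← map_add]
  refine mem_weightGeIdeal_iff.mp h _ ?_
  rwa [mem_support_iff, coeff_mul_monomial, mul_one, ← mem_support_iff]

end WeightGeIdeal

theorem card_filter_range_natCast_eq {d L : ℕ} [NeZero d] (hL : d ∣ L) (y : ZMod d) :
    #{l ∈ range L | ((l : ℕ) : ZMod d) = y} = L / d := by
  have hmod : ∀ l : ℕ, (l : ZMod d) = y ↔ l ≡ y.val [MOD d] := fun l => by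
    rw [← ZMod.natCast_eq_natCast_iff, ZMod.natCast_zmod_val]
  simp_rw [hmod, ← Nat.count_eq_card_filter_range, Nat.count_modEq_card L (NeZero.pos d),
    Nat.mod_eq_zero_of_dvd hL]
  simp

theorem ZMod.apply_eq_of_forall_apply_add_one {n : ℕ} [NeZero n] {α : Type*} {f : ZMod n → α}
    (h : ∀ v, f (v + 1) = f v) (v w : ZMod n) : f v = f w := by
  have hnat : ∀ k : ℕ, f k = f 0 := fun k => by
    induction k with
    | zero => rw [Nat.cast_zero]
    | succ k ih => rw [Nat.cast_succ, h, ih]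
  rw [← ZMod.natCast_zmod_val v, ← ZMod.natCast_zmod_val w, hnat, hnat]

theorem ZMod.exists_lt_nsmul_eq_of_gcd_dvd {n m : ℕ} [NeZero n] {x : ZMod n}
    (hx : Nat.gcd n m ∣ x.val) : ∃ k < n / Nat.gcd n m, k • (m : ZMod n) = x := by
  classical
  have hmem : x ∈ AddSubgroup.zmultiples (m : ZMod n) := by
    obtain ⟨q, hq⟩ := hx
    refine ⟨q * Nat.gcdB n m, ?_⟩
    have hbezout := congrArg (Int.cast : ℤ → ZMod n) (Nat.gcd_eq_gcd_ab n m)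
    push_cast [ZMod.natCast_self, zero_mul, zero_add] at hbezout
    change ((q * Nat.gcdB n m : ℤ)) • (m : ZMod n) = x
    rw [← ZMod.natCast_zmod_val x, hq, zsmul_eq_mul]
    push_cast
    rw [hbezout]
    ring
  rw [mem_zmultiples_iff_mem_range_addOrderOf, ZMod.addOrderOf_coe m (NeZero.ne n)] at hmem
  simpa using hmem

theorem ZMod.val_mod_eq_iff_cast_eq {n d j : ℕ} [NeZero n] (hj : j < d) (k : ZMod n) :
    k.val % d = j ↔ (k.cast : ZMod d) = j := by
  rw [ZMod.cast_eq_val, ZMod.natCast_eq_natCast_iff', Nat.mod_eq_of_lt hj]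

theorem Finsupp.sum_single_one_le {ι σ : Type*} [Fintype ι] {κ : ι → σ}
    (hκ : Function.Injective κ) {e : σ →₀ ℕ} (he : ∀ i, e (κ i) ≠ 0) :
    ∑ i, Finsupp.single (κ i) 1 ≤ e := by
  classical
  intro v
  rw [Finsupp.finsetSum_apply]
  by_cases hv : v ∈ Set.range κ
  · obtain ⟨i, rfl⟩ := hv
    simpa [Finsupp.single_apply, hκ.eq_iff, Nat.one_le_iff_ne_zero] using he i
  · simp_all

section PathExponent

variable {n : ℕ}

noncomputable def pathExponent (a : ZMod n) (L : ℕ) : ZMod n →₀ ℕ :=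
  ∑ l ∈ range L, Finsupp.single (a + l) 1

theorem prod_X_eq_monomial_pathExponent {R : Type*} [CommSemiring R] (a : ZMod n) (L : ℕ) :
    ∏ l ∈ range L, X (a + l) = monomial (pathExponent a L) (1 : R) := by
  rw [pathExponent, monomial_sum_one]
  rfl

theorem pathExponent_apply (a : ZMod n) (L : ℕ) (v : ZMod n) :
    pathExponent a L v = #{l ∈ range L | a + (l : ℕ) = v} := by
  classical
  simp [pathExponent, Finsupp.finsetSum_apply, Finsupp.single_apply]

theorem pathExponent_add (a : ZMod n) (L L' : ℕ) :
    pathExponent a (L + L') = pathExponent a L + pathExponent (a + (L : ZMod n)) L' := by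
  simp only [pathExponent, sum_range_add, Nat.cast_add, add_assoc]

theorem pathExponent_add_one_apply_add_one (a : ZMod n) (L : ℕ) (v : ZMod n) :
    pathExponent (a + 1) L (v + 1) = pathExponent a L v := by
  simp only [pathExponent_apply, add_right_comm a 1, add_left_inj]

theorem pathExponent_apply_add_one (a : ZMod n) (L : ℕ) (v : ZMod n) :
    pathExponent a L (v + 1) + Finsupp.single (a + (L : ZMod n)) 1 (v + 1) =
      Finsupp.single a 1 (v + 1) + pathExponent a L v := by
  have hsucc : pathExponent a L + Finsupp.single (a + (L : ZMod n)) 1 =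
      Finsupp.single a 1 + pathExponent (a + 1) L := by
    rw [pathExponent, ← sum_range_succ, sum_range_succ', add_comm, pathExponent]
    simp only [Nat.cast_zero, add_zero, Nat.cast_succ, add_assoc, add_comm (1 : ZMod n)]
  rw [← Finsupp.add_apply, hsucc, Finsupp.add_apply, pathExponent_add_one_apply_add_one]

theorem pathExponent_mul_apply [NeZero n] (a : ZMod n) (c : ℕ) (v : ZMod n) :
    pathExponent a (c * n) v = c := by
  simp_rw [pathExponent_apply, ← eq_sub_iff_add_eq',
    card_filter_range_natCast_eq (dvd_mul_left n c), Nat.mul_div_cancel _ (NeZero.pos n)]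

theorem degree_pathExponent (a : ZMod n) (L : ℕ) : (pathExponent a L).degree = L := by
  simp [pathExponent]

theorem weight_pathExponent_eq {d L : ℕ} [NeZero d] (hdn : d ∣ n) (hdL : d ∣ L) (a : ZMod n)
    (y : ZMod d) :
    Finsupp.weight (fun v : ZMod n => if (v.cast : ZMod d) = y then 1 else 0) (pathExponent a L) =
      L / d := by
  simp_rw [pathExponent, map_sum, Finsupp.weight_single, one_smul, sum_boole, Nat.cast_id,
    ZMod.cast_add hdn, ZMod.cast_natCast hdn, ← eq_sub_iff_add_eq',
    card_filter_range_natCast_eq hdL]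

theorem pathExponent_card_apply [NeZero n] (a v : ZMod n) : pathExponent a n v = 1 := by
  simpa using pathExponent_mul_apply a 1 v

theorem sum_pathExponent_eq_of_perm [NeZero n] {ι : Type*} [Fintype ι] (a : ι → ZMod n)
    (L : ι → ℕ) (π : Equiv.Perm ι) (hL : ∀ i, a i + (L i : ZMod n) = a (π i) + 1)
    {v₀ : ZMod n} (hv₀ : v₀ ∉ Set.range a) :
    ∑ i, pathExponent (a i) (L i) =
      (∑ i, pathExponent (a i) (L i)) v₀ • pathExponent 0 n +
        ∑ i, Finsupp.single (a i) 1 := by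
  classical
  set Q := ∑ i, pathExponent (a i) (L i)
  set R : ZMod n →₀ ℕ := ∑ i, Finsupp.single (a i) 1
  -- From `v` to `v + 1`, path `i` gains its start `a i` and loses its end `a (π i)`.
  have hstep : ∀ v, Q (v + 1) + R v = R (v + 1) + Q v := by
    intro v
    have hends : ∑ i, Finsupp.single (a i + (L i : ZMod n)) 1 (v + 1) = R v := by
      simp_rw [hL, R, Finsupp.finsetSum_apply, Finsupp.single_apply, add_left_inj]
      exact Equiv.sum_comp π (fun i => if a i = v then 1 else 0)
    simp only [Q, R, Finsupp.finsetSum_apply, ← hends, ← sum_add_distrib,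
      pathExponent_apply_add_one]
  have hconst := ZMod.apply_eq_of_forall_apply_add_one
    (f := fun v => (Q v : ℤ) - R v) (fun v => by have := hstep v; omega)
  have hR₀ : R v₀ = 0 := by
    simp only [R, Finsupp.finsetSum_apply, Finsupp.single_apply]
    exact sum_eq_zero fun i _ => if_neg fun h => hv₀ ⟨i, h⟩
  ext v
  have := hconst v v₀
  simp only [Finsupp.add_apply, Finsupp.smul_apply, smul_eq_mul, pathExponent_card_apply,
    mul_one]
  omega

end PathExponent

theorem exists_chain_lengths {n m : ℕ} [NeZero n] (κ : ZMod (Nat.gcd n m) → ZMod n)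
    (hκ : ∀ j, ((κ j).cast : ZMod (Nat.gcd n m)) = j) (j : ZMod (Nat.gcd n m)) :
    ∃ k < n / Nat.gcd n m, κ j + ((k * m : ℕ) : ZMod n) = κ (j - 1) + 1 := by
  have hdn : Nat.gcd n m ∣ n := Nat.gcd_dvd_left n m
  have hclass : Nat.gcd n m ∣ (κ (j - 1) + 1 - κ j).val := by
    rw [← ZMod.natCast_eq_zero_iff, ← ZMod.cast_eq_val, ZMod.cast_sub hdn, ZMod.cast_add hdn,
      ZMod.cast_one hdn, hκ, hκ]
    ring
  obtain ⟨k, hk, hkm⟩ := ZMod.exists_lt_nsmul_eq_of_gcd_dvd hclass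
  exact ⟨k, hk, by rw [Nat.cast_mul, ← nsmul_eq_mul, hkm]; ring⟩

section CyclePathIdeal

variable {K : Type*} [Field K] {n m : ℕ}

theorem monomial_pathExponent_mem_cyclePathIdeal (a : ZMod n) :
    monomial (pathExponent a m) 1 ∈ cyclePathIdeal K n m :=
  Ideal.subset_span ⟨a, (prod_X_eq_monomial_pathExponent a m).symm⟩

theorem monomial_pathExponent_mul_mem_pow (a : ZMod n) (k : ℕ) :
    monomial (pathExponent a (k * m)) 1 ∈ cyclePathIdeal K n m ^ k := by
  induction k generalizing a with
  | zero => simp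
  | succ k ih =>
    rw [add_one_mul, pathExponent_add, ← mul_one (1 : K), ← monomial_mul, pow_succ]
    exact Ideal.mul_mem_mul (ih a) (monomial_pathExponent_mem_cyclePathIdeal _)

theorem cyclePathIdeal_le_weightGeIdeal {d : ℕ} [NeZero d] (hdn : d ∣ n) (hdm : d ∣ m)
    (y : ZMod d) :
    cyclePathIdeal K n m ≤
      weightGeIdeal K (fun v : ZMod n => if (v.cast : ZMod d) = y then 1 else 0) (m / d) := by
  refine Ideal.span_le.mpr ?_
  rintro _ ⟨a, rfl⟩
  rw [prod_X_eq_monomial_pathExponent]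
  exact monomial_mem_weightGeIdeal (weight_pathExponent_eq hdn hdm a y).ge 1

theorem exists_cast_eq_of_mul_mem_pow {d t0 α t : ℕ} [NeZero d] (hdn : d ∣ n) (hdm : d ∣ m)
    (ht0 : m * t0 = α * n + d) (ht : t0 ≤ t) {p : MvPolynomial (ZMod n) K}
    (hp : p * monomial (α • pathExponent 0 n + (t - t0) • pathExponent 0 m) 1 ∈
      cyclePathIdeal K n m ^ t)
    {e : ZMod n →₀ ℕ} (he : e ∈ p.support) (y : ZMod d) :
    ∃ v, (v.cast : ZMod d) = y ∧ e v ≠ 0 := by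
  set ω := fun v : ZMod n => if (v.cast : ZMod d) = y then 1 else 0
  have hbound := le_weight_add_of_mul_monomial_mem
    (pow_le_weightGeIdeal (cyclePathIdeal_le_weightGeIdeal hdn hdm y) t hp) he
  simp only [map_add, map_nsmul, weight_pathExponent_eq hdn hdn, weight_pathExponent_eq hdn hdm,
    smul_eq_mul] at hbound
  obtain ⟨m', rfl⟩ := hdm
  obtain ⟨r, rfl⟩ := hdn
  obtain ⟨s, rfl⟩ := Nat.exists_eq_add_of_le ht
  have hd : 0 < d := NeZero.pos d
  have hdiv : t0 * m' = α * r + 1 := by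
    apply Nat.eq_of_mul_eq_mul_left hd
    linarith
  simp only [Nat.mul_div_cancel_left _ hd, Nat.add_sub_cancel_left] at hbound
  have hweight : Finsupp.weight ω e ≠ 0 := by nlinarith
  rw [Finsupp.weight_apply, Finsupp.sum] at hweight
  obtain ⟨v, -, hv⟩ := exists_ne_zero_of_sum_ne_zero hweight
  refine ⟨v, ?_, fun h => hv (by simp [h])⟩
  by_contra hne
  exact hv (by simp [ω, hne])

theorem exists_monomial_smul_add_sum_single_mem_pow [NeZero n] [NeZero (Nat.gcd n m)]
    (hdn : Nat.gcd n m < n) (κ : ZMod (Nat.gcd n m) → ZMod n)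
    (hκ : ∀ j, ((κ j).cast : ZMod (Nat.gcd n m)) = j) :
    ∃ T c : ℕ, T + Nat.gcd n m ≤ n ∧ T * m = c * n + Nat.gcd n m ∧
      monomial (c • pathExponent 0 n + ∑ j, Finsupp.single (κ j) 1) (1 : K) ∈
        cyclePathIdeal K n m ^ T := by
  choose k hk_lt hk using exists_chain_lengths κ hκ
  obtain ⟨v₀, hv₀⟩ : ∃ v₀, v₀ ∉ Set.range κ := by
    by_contra! h
    have := Fintype.card_le_of_surjective κ h
    simp only [ZMod.card] at this
    omega
  have hQ := sum_pathExponent_eq_of_perm κ (fun j => k j * m) (Equiv.subRight 1) hk hv₀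
  refine ⟨∑ j, k j, (∑ j, pathExponent (κ j) (k j * m)) v₀, ?_, ?_, ?_⟩
  · calc ∑ j, k j + Nat.gcd n m = ∑ j, (k j + 1) := by simp [sum_add_distrib, ZMod.card]
      _ ≤ ∑ _j : ZMod (Nat.gcd n m), n / Nat.gcd n m := sum_le_sum fun j _ => hk_lt j
      _ = n := by simp [ZMod.card, Nat.mul_div_cancel' (Nat.gcd_dvd_left n m)]
  · simpa only [map_sum, map_add, map_nsmul, degree_pathExponent, Finsupp.degree_single,
      sum_const, card_univ, ZMod.card, smul_eq_mul, mul_one, ← sum_mul]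
      using congrArg Finsupp.degree hQ
  · rw [← hQ, monomial_sum_one, ← prod_pow_eq_pow_sum]
    exact Ideal.prod_mem_prod fun j _ => monomial_pathExponent_mul_mem_pow _ _

theorem monomial_sum_single_add_mem_pow {t0 α : ℕ} [NeZero (Nat.gcd n m)] (hd : 1 < Nat.gcd n m)
    (hmn : m < n) (ht0 : m * t0 = α * n + Nat.gcd n m)
    (ht0max :
      ∀ s : ℕ, s ≤ n - 1 → (∃ β : ℕ, 0 < β ∧ m * s = β * n + Nat.gcd n m) → s ≤ t0)
    (κ : ZMod (Nat.gcd n m) → ZMod n) (hκ : ∀ j, ((κ j).cast : ZMod (Nat.gcd n m)) = j) :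
    monomial (∑ j, Finsupp.single (κ j) 1 + α • pathExponent 0 n) (1 : K) ∈
      cyclePathIdeal K n m ^ t0 := by
  have : NeZero n := NeZero.of_pos (by omega)
  have hdm : Nat.gcd n m ≤ m :=
    Nat.le_of_dvd (Nat.pos_of_ne_zero fun h => by simp [h] at ht0; omega) (Nat.gcd_dvd_right n m)
  obtain ⟨T, c, hTn, hdeg, hmem⟩ :=
    exists_monomial_smul_add_sum_single_mem_pow (K := K) (by omega) κ hκ
  have hTt0 : T ≤ t0 := by
    rcases Nat.eq_zero_or_pos c with hc | hc
    · rw [hc, zero_mul, zero_add] at hdeg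
      have : T ≤ 1 := by nlinarith
      have : 0 < t0 := by nlinarith
      omega
    · exact ht0max T (by omega) ⟨c, hc, by rw [mul_comm, hdeg]⟩
  have hcα : c * n ≤ α * n := by nlinarith
  have hpad : (t0 - T) * m = (α - c) * n := by
    rw [Nat.sub_mul, Nat.sub_mul, mul_comm t0]; omega
  have hsplit : ∑ j, Finsupp.single (κ j) 1 + α • pathExponent 0 n =
      c • pathExponent 0 n + ∑ j, Finsupp.single (κ j) 1 + pathExponent 0 ((t0 - T) * m) := by
    have hcα' : c ≤ α := Nat.le_of_mul_le_mul_right hcα (NeZero.pos n)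
    ext v
    rw [hpad]
    simp only [Finsupp.add_apply, Finsupp.smul_apply, smul_eq_mul, pathExponent_mul_apply,
      pathExponent_card_apply]
    omega
  have hmem' :=
    Ideal.mul_mem_mul hmem (monomial_pathExponent_mul_mem_pow (K := K) (m := m) 0 (t0 - T))
  rwa [← pow_add, Nat.add_sub_cancel' hTt0, monomial_mul, mul_one, ← hsplit] at hmem'

theorem monomial_mul_mem_pow_of_forall_exists_cast_eq {t0 α t : ℕ}
    [NeZero (Nat.gcd n m)] (hd : 1 < Nat.gcd n m) (hmn : m < n)
    (ht0 : m * t0 = α * n + Nat.gcd n m)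
    (ht0max :
      ∀ s : ℕ, s ≤ n - 1 → (∃ β : ℕ, 0 < β ∧ m * s = β * n + Nat.gcd n m) → s ≤ t0)
    (ht : t0 ≤ t) {e : ZMod n →₀ ℕ}
    (he : ∀ y : ZMod (Nat.gcd n m), ∃ v, (v.cast : ZMod (Nat.gcd n m)) = y ∧ e v ≠ 0)
    (a : K) :
    monomial e a * monomial (α • pathExponent 0 n + (t - t0) • pathExponent 0 m) 1 ∈
      cyclePathIdeal K n m ^ t := by
  choose κ hκ he using he
  obtain ⟨f, rfl⟩ := exists_add_of_le <|
    Finsupp.sum_single_one_le (fun i j h => by rw [← hκ i, ← hκ j, h]) he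
  have hmem :=
    Ideal.mul_mem_mul (monomial_sum_single_add_mem_pow (K := K) hd hmn ht0 ht0max κ hκ)
    (Ideal.pow_mem_pow (monomial_pathExponent_mem_cyclePathIdeal (K := K) (m := m) 0) (t - t0))
  rw [← pow_add, Nat.add_sub_cancel' ht, monomial_pow, monomial_mul, one_pow, mul_one] at hmem
  convert Ideal.mul_mem_left _ (monomial f a) hmem using 1
  rw [monomial_mul, monomial_mul, mul_one]
  congr 1
  ac_rfl

end CyclePathIdeal

theorem mem_iInf_span_X_val_mod_iff {R : Type*} [CommSemiring R] {n d : ℕ} [NeZero n] [NeZero d]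
    {p : MvPolynomial (ZMod n) R} :
    p ∈ ⨅ j ∈ range d, Ideal.span {q | ∃ k : ZMod n, k.val % d = j ∧ q = X k} ↔
      ∀ e ∈ p.support, ∀ y : ZMod d, ∃ v, (v.cast : ZMod d) = y ∧ e v ≠ 0 := by
  have hspan : ∀ j, {q : MvPolynomial (ZMod n) R | ∃ k : ZMod n, k.val % d = j ∧ q = X k} =
      X '' {k | k.val % d = j} := fun j => by
    ext q
    simp [eq_comm]
  simp only [Ideal.mem_iInf, mem_range, hspan, mem_ideal_span_X_image, Set.mem_ofPred_eq]
  constructor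
  · intro h e he y
    obtain ⟨v, hv, hev⟩ := h y.val (ZMod.val_lt y) e he
    rw [ZMod.val_mod_eq_iff_cast_eq (ZMod.val_lt y), ZMod.natCast_zmod_val] at hv
    exact ⟨v, hv, hev⟩
  · intro h j hj e he
    obtain ⟨v, hv, hev⟩ := h e he j
    exact ⟨v, (ZMod.val_mod_eq_iff_cast_eq hj v).mpr hv, hev⟩

theorem colon_wt_eq_U_of_gcd_gt_one_general
    (K : Type*) [Field K] (n m : ℕ) (hmn : m < n)
    (hd : 1 < Nat.gcd n m) (t0 α : ℕ)
    (ht0 : m * t0 = α * n + Nat.gcd n m)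
    (ht0max : ∀ s : ℕ, s ≤ n - 1 → (∃ β : ℕ, 0 < β ∧ m * s = β * n + Nat.gcd n m) → s ≤ t0)
    (t : ℕ) (ht : t0 ≤ t) :
    ((cyclePathIdeal K n m) ^ t).colon
      (Ideal.span {((∏ j ∈ Finset.range n, X ((j : ℕ) : ZMod n)) ^ α *
        (∏ j ∈ Finset.range m, X ((j : ℕ) : ZMod n)) ^ (t - t0) : MvPolynomial (ZMod n) K)})
      = ⨅ j ∈ Finset.range (Nat.gcd n m),
          Ideal.span { p : MvPolynomial (ZMod n) K |
            ∃ k : ZMod n, k.val % Nat.gcd n m = j ∧ p = X k } := by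
  have : NeZero n := NeZero.of_pos (by omega)
  have : NeZero (Nat.gcd n m) := NeZero.of_pos (by omega)
  have hw : ∀ L : ℕ,
      ∏ j ∈ range L, X ((j : ℕ) : ZMod n) = monomial (pathExponent 0 L) (1 : K) :=
    fun L => by simpa only [zero_add] using prod_X_eq_monomial_pathExponent (0 : ZMod n) L
  ext p
  rw [Ideal.mem_colon_span_singleton, hw, hw, monomial_pow, monomial_pow, monomial_mul, one_pow,
    one_pow, mul_one, mem_iInf_span_X_val_mod_iff]
  refine ⟨fun h e he => exists_cast_eq_of_mul_mem_pow (Nat.gcd_dvd_left n m)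
    (Nat.gcd_dvd_right n m) ht0 ht h he, fun h => ?_⟩
  rw [p.as_sum, sum_mul]
  exact Ideal.sum_mem _ fun e he =>
    monomial_mul_mem_pow_of_forall_exists_cast_eq hd hmn ht0 ht0max ht (h e he) _

/-- If `d = gcd(n,m) > 1`, then for every `t ≥ t₀` one has `(J_{n,m}^t : w_t) = U_{n,d}`,
where `U_{n,d}` is the intersection, over the `d` residue classes `j` modulo `d`, of the
prime ideals generated by the variables whose index is `≡ j (mod d)`. -/
theorem colon_wt_eq_U_of_gcd_gt_one
    (K : Type*) [Field K] (n m : ℕ) (hm : 2 ≤ m) (hmn : m < n)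
    (hd : 1 < Nat.gcd n m) (t0 α : ℕ) (hα : 0 < α) (ht0le : t0 ≤ n - 1)
    (ht0 : m * t0 = α * n + Nat.gcd n m)
    (ht0max : ∀ s : ℕ, s ≤ n - 1 → (∃ β : ℕ, 0 < β ∧ m * s = β * n + Nat.gcd n m) → s ≤ t0)
    (t : ℕ) (ht : t0 ≤ t) :
    ((cyclePathIdeal K n m) ^ t).colon
      (Ideal.span {((∏ j ∈ Finset.range n, X ((j : ℕ) : ZMod n)) ^ α *
        (∏ j ∈ Finset.range m, X ((j : ℕ) : ZMod n)) ^ (t - t0) : MvPolynomial (ZMod n) K)})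
      = ⨅ j ∈ Finset.range (Nat.gcd n m),
          Ideal.span { p : MvPolynomial (ZMod n) K |
            ∃ k : ZMod n, k.val % Nat.gcd n m = j ∧ p = X k } :=
  colon_wt_eq_U_of_gcd_gt_one_general K n m hmn hd t0 α ht0 ht0max t ht
end

section
/- Let n ≥ 5 be an odd integer. Then depth(S/J_{n,n−2}^t) = 0 for all integers t ≥ (n−1)/2. -/
open MvPolynomial

/-- The depth of `S/I` with respect to the maximal graded ideal `(x_0, …, x_{n-1})`:
the maximal length of an `S/I`-regular sequence of elements of the maximal graded ideal. -/
noncomputable def quotDepth {K : Type*} [Field K] {σ : Type*}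
    (I : Ideal (MvPolynomial σ K)) : ℕ :=
  sSup { k : ℕ | ∃ rs : List (MvPolynomial σ K), rs.length = k ∧
    (∀ r ∈ rs, r ∈ maxIdeal K σ) ∧
    RingTheory.Sequence.IsRegular (MvPolynomial σ K ⧸ I) rs }

/-!
Write `n = 2s + 3` and `P = x_0 ⋯ x_{n-1}`. A generator of `J = J_{n,n-2}` is `P` with two
cyclically adjacent variables removed, and the generators starting at `j + 3, j + 5, …, j + n`
omit the pairs `{j+1, j+2}, …, {j+n-2, j+n-1}`, which cover every variable except `x_j`. Hence
`x_j P^s` is a product of `s + 1` generators, so `x_j u ∈ J^t` for every `j`, where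
`u = P^s g^(t-s-1)` and `g` is any generator. But `u` is a monomial of degree
`n s + (n-2)(t-s-1) < (n-2) t`, while `J^t` lives in degree `≥ (n-2) t`, so `u ∉ J^t`.
Thus `u` is a nonzero socle element of `S/J^t`, and no element of the maximal ideal is a
nonzerodivisor on `S/J^t`.
-/

theorem not_isSMulRegular_of_mul_mem {R : Type*} [CommRing R] {I : Ideal R} {r u : R}
    (hu : u ∉ I) (hru : r * u ∈ I) : ¬IsSMulRegular (R ⧸ I) r := by
  intro hr
  refine hu (Ideal.Quotient.eq_zero_iff_mem.mp (hr ?_))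
  change r • Ideal.Quotient.mk I u = r • 0
  rw [smul_zero, Algebra.smul_def, Ideal.Quotient.algebraMap_eq, ← map_mul,
    Ideal.Quotient.eq_zero_iff_mem]
  exact hru

theorem quotDepth_eq_zero_of_forall_X_mul_mem {K : Type*} [Field K] {σ : Type*}
    {I : Ideal (MvPolynomial σ K)} {u : MvPolynomial σ K} (hu : u ∉ I)
    (hXu : ∀ i, X i * u ∈ I) : quotDepth I = 0 := by
  have hmax : maxIdeal K σ ≤ I.colon (Ideal.span {u}) :=
    Ideal.span_le.mpr <| Set.range_subset_iff.mpr fun i =>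
      Submodule.mem_colon_span_singleton.mpr (hXu i)
  refine Nat.eq_zero_of_le_zero (csSup_le' ?_)
  rintro k ⟨_ | ⟨r, rs⟩, rfl, hmem, hreg⟩
  · rfl
  · have hru : r * u ∈ I :=
      Submodule.mem_colon_span_singleton.mp (hmax (hmem r List.mem_cons_self))
    exact absurd (RingTheory.Sequence.isWeaklyRegular_cons_iff _ _ _ |>.mp hreg.1).1
      (not_isSMulRegular_of_mul_mem hu hru)

theorem MvPolynomial.IsHomogeneous.mem_pow_idealOfVars_iff {R σ : Type*} [CommSemiring R]
    {p : MvPolynomial σ R} {d : ℕ} (hp : p.IsHomogeneous d) (hp0 : p ≠ 0) (N : ℕ) :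
    p ∈ idealOfVars σ R ^ N ↔ N ≤ d := by
  have hdeg : ∀ x ∈ p.support, Finsupp.degree x = d := fun x hx => by
    rw [Finsupp.degree_eq_weight_one]
    exact hp (mem_support_iff.mp hx)
  obtain ⟨x, hx⟩ := support_nonempty.mpr hp0
  rw [MvPolynomial.mem_pow_idealOfVars_iff]
  exact ⟨fun h => hdeg x hx ▸ h x hx, fun h y hy => hdeg y hy ▸ h⟩

noncomputable def cyclePath (R : Type*) [CommSemiring R] (n m : ℕ) (i : ZMod n) :
    MvPolynomial (ZMod n) R :=
  ∏ j ∈ Finset.range m, X (i + (j : ZMod n))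

section CyclePath

variable {R : Type*} [CommSemiring R] {n : ℕ}

theorem cyclePath_one (i : ZMod n) : cyclePath R n 1 i = X i := by
  simp [cyclePath]

theorem cyclePath_add (m k : ℕ) (i : ZMod n) :
    cyclePath R n (m + k) i = cyclePath R n m i * cyclePath R n k (i + m) := by
  simp only [cyclePath, Finset.prod_range_add, Nat.cast_add, add_assoc]

theorem cyclePath_self [NeZero n] (i : ZMod n) : cyclePath R n n i = ∏ a, X a :=
  Finset.prod_nbij' (fun j => i + j) (fun a => (a - i).val) (by simp) (by simp [ZMod.val_lt])
    (fun j hj => by simp [ZMod.val_cast_of_lt (Finset.mem_range.mp hj)]) (by simp) (by simp)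

theorem prod_cyclePath (k s : ℕ) (i : ZMod n) :
    ∏ r ∈ Finset.range s, cyclePath R n k (i + (k * r : ℕ)) = cyclePath R n (k * s) i := by
  induction s with
  | zero => simp [cyclePath]
  | succ s ih => rw [Finset.prod_range_succ, ih, Nat.mul_succ, cyclePath_add]

theorem isHomogeneous_cyclePath (m : ℕ) (i : ZMod n) : (cyclePath R n m i).IsHomogeneous m := by
  simpa [cyclePath] using
    IsHomogeneous.prod (Finset.range m) _ _ fun j _ => isHomogeneous_X R (i + (j : ZMod n))

theorem cyclePath_ne_zero [NoZeroDivisors R] [Nontrivial R] (m : ℕ) (i : ZMod n) :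
    cyclePath R n m i ≠ 0 :=
  Finset.prod_ne_zero_iff.mpr fun _ _ => X_ne_zero _

end CyclePath

theorem X_mul_prod_X_pow_eq_prod_cyclePath {R : Type*} [CommRing R] [IsDomain R] {n : ℕ}
    [NeZero n] {s : ℕ} (hn : n = 2 * s + 3) (j : ZMod n) :
    X j * (∏ a, X a) ^ s =
      ∏ r ∈ Finset.range (s + 1), cyclePath R n (2 * s + 1) (j + 1 + (2 * r : ℕ) + 2) := by
  have hP : ∀ i, cyclePath R n 2 i * cyclePath R n (2 * s + 1) (i + 2) = ∏ a, X a := fun i => by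
    have h := cyclePath_add (R := R) 2 (2 * s + 1) i
    rw [show 2 + (2 * s + 1) = n by omega, cyclePath_self, Nat.cast_ofNat] at h
    exact h.symm
  have hPj : X j * cyclePath R n (2 * (s + 1)) (j + 1) = ∏ a, X a := by
    have h := cyclePath_add (R := R) 1 (2 * (s + 1)) j
    rw [show 1 + 2 * (s + 1) = n by omega, cyclePath_self, cyclePath_one, Nat.cast_one] at h
    exact h.symm
  have hPs : (∏ a, X a) ^ (s + 1) = cyclePath R n (2 * (s + 1)) (j + 1) *
      ∏ r ∈ Finset.range (s + 1), cyclePath R n (2 * s + 1) (j + 1 + (2 * r : ℕ) + 2) := by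
    rw [← prod_cyclePath, ← Finset.prod_mul_distrib]
    simp [hP]
  refine mul_right_cancel₀ (cyclePath_ne_zero (2 * (s + 1)) (j + 1)) ?_
  rw [mul_comm (∏ r ∈ _, _), ← hPs, pow_succ, ← hPj]
  ring

section CyclePathIdeal

variable {K : Type*} [Field K] {n : ℕ}

theorem cyclePath_mem_cyclePathIdeal (m : ℕ) (i : ZMod n) :
    cyclePath K n m i ∈ cyclePathIdeal K n m :=
  Ideal.subset_span ⟨i, rfl⟩

theorem pow_cyclePathIdeal_le (m t : ℕ) :
    cyclePathIdeal K n m ^ t ≤ idealOfVars (ZMod n) K ^ (m * t) := by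
  have h : cyclePathIdeal K n m ≤ idealOfVars (ZMod n) K ^ m :=
    Ideal.span_le.mpr fun _ ⟨i, hi⟩ => hi ▸
      ((isHomogeneous_cyclePath m i).mem_pow_idealOfVars_iff (cyclePath_ne_zero m i) m).mpr le_rfl
  rw [pow_mul]
  exact Ideal.pow_right_mono h t

theorem X_mul_prod_X_pow_mem_pow_cyclePathIdeal [NeZero n] {s : ℕ} (hn : n = 2 * s + 3)
    (j : ZMod n) : X j * (∏ a, X a) ^ s ∈ cyclePathIdeal K n (2 * s + 1) ^ (s + 1) := by
  rw [X_mul_prod_X_pow_eq_prod_cyclePath hn, show cyclePathIdeal K n (2 * s + 1) ^ (s + 1) =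
    ∏ _r ∈ Finset.range (s + 1), cyclePathIdeal K n (2 * s + 1) by simp]
  exact Ideal.prod_mem_prod fun r _ => cyclePath_mem_cyclePathIdeal _ _

theorem prod_X_pow_mul_cyclePath_pow_notMem [NeZero n] {s : ℕ} (hn : n = 2 * s + 3)
    (i : ZMod n) (k : ℕ) :
    (∏ a, X a) ^ s * cyclePath K n (2 * s + 1) i ^ k ∉
      cyclePathIdeal K n (2 * s + 1) ^ (s + 1 + k) := by
  rw [← cyclePath_self (R := K) (0 : ZMod n)]
  intro hmem
  have hu := ((isHomogeneous_cyclePath (R := K) n 0).pow s).mul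
    ((isHomogeneous_cyclePath (2 * s + 1) i).pow k)
  have hu0 := mul_ne_zero (pow_ne_zero s (cyclePath_ne_zero (R := K) n 0))
    (pow_ne_zero k (cyclePath_ne_zero (2 * s + 1) i))
  have h := (hu.mem_pow_idealOfVars_iff hu0 _).mp (pow_cyclePathIdeal_le _ _ hmem)
  subst hn
  nlinarith

end CyclePathIdeal

/-- If `n ≥ 5` is odd, then `depth(S/J_{n,n-2}^t) = 0` for all `t ≥ (n-1)/2`. -/
theorem depth_eq_zero_odd
    (K : Type*) [Field K] (n : ℕ) (hn : 5 ≤ n) (hodd : Odd n)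
    (t : ℕ) (ht : (n - 1) / 2 ≤ t) :
    quotDepth ((cyclePathIdeal K n (n - 2)) ^ t) = 0 := by
  obtain ⟨s, hs⟩ : ∃ s, n = 2 * s + 3 := by
    obtain ⟨k, rfl⟩ := hodd
    exact ⟨k - 1, by omega⟩
  obtain ⟨k, rfl⟩ : ∃ k, t = s + 1 + k := ⟨t - (s + 1), by omega⟩
  have : NeZero n := ⟨by omega⟩
  rw [show n - 2 = 2 * s + 1 by omega]
  refine quotDepth_eq_zero_of_forall_X_mul_mem
    (prod_X_pow_mul_cyclePath_pow_notMem hs 0 k) fun j => ?_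
  rw [pow_add, ← mul_assoc]
  exact Ideal.mul_mem_mul (X_mul_prod_X_pow_mem_pow_cyclePathIdeal hs j)
    (Ideal.pow_mem_pow (cyclePath_mem_cyclePathIdeal _ 0) k)
end

section
/- Let n ≥ 4 be an even integer. Then depth(S/J_{n,n−2}^t) ≤ 1 for all integers t ≥ n − 1. -/
open MvPolynomial

/-!
If `depth(M) ≥ 2`, a regular sequence `r₁, r₂` in `𝔪 = (x_0, …, x_{n-1})` shows that every family
`(w_a)` in `M` with `x_a w_b = x_b w_a` is of the form `w_a = x_a v`. For `M = S/J^t` and `n = 2h`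
we exhibit a family that is not. Let
`x^ζ = x_0^{h-2} x_1^{h-2} ∏_{v ≥ 2} x_v^{t-1}` and put `w_a = x_a x^ζ` for `a` even, `w_a = 0` for
`a` odd. A monomial `x^ξ` lies in `J^t` iff some product of `t` generators divides it, which is a
linear covering condition on the multiplicities of the generators (`IsCovered`). Summing it over
the vertices of one parity shows `x_0 x^ζ, x_1 x^ζ ∉ J^t`, while an explicit covering gives
`x_a x_b x^ζ ∈ J^t` for `a` even and `b` odd, so `(w_a)` satisfies the relations. If `w_a = x_a v`,
then `x_0 (x^ζ - v)` and `x_1 v` lie in the monomial ideal `J^t`, and `x^ζ` occurs in `x^ζ - v` or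
in `v`; so `x_0 x^ζ` or `x_1 x^ζ` lies in `J^t`.
-/

open Finset

theorem exists_forall_eq_smul_of_isSMulRegular {R M ι : Type*} [CommRing R] [AddCommGroup M]
    [Module R M] [Fintype ι] (x : ι → R) {r₁ r₂ : R}
    (hr₁ : r₁ ∈ Submodule.span R (Set.range x)) (hr₂ : r₂ ∈ Submodule.span R (Set.range x))
    (h₁ : IsSMulRegular M r₁) (h₂ : IsSMulRegular (QuotSMulTop r₁ M) r₂)
    (w : ι → M) (hw : ∀ a b, x a • w b = x b • w a) :
    ∃ v : M, ∀ a, w a = x a • v := by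
  obtain ⟨c, hc⟩ := (Submodule.mem_span_range_iff_exists_fun R).mp hr₁
  obtain ⟨d, hd⟩ := (Submodule.mem_span_range_iff_exists_fun R).mp hr₂
  set W : M := ∑ a, c a • w a
  have hxW : ∀ b, x b • W = r₁ • w b := fun b => by
    simp only [W, Finset.smul_sum, smul_comm (x b), ← hw _ b, smul_smul, ← Finset.sum_smul,
      ← hc, smul_eq_mul]
  have hr₂W : r₂ • W = r₁ • ∑ b, d b • w b := by
    simp only [← hd, Finset.sum_smul, Finset.smul_sum, smul_assoc, hxW, smul_comm r₁]
  -- `r₂` kills the class of `W` in `M / r₁ M`, so `W = r₁ • v`; cancelling `r₁` gives `w = x • v`.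
  obtain ⟨v, -, hv⟩ : ∃ v ∈ (⊤ : Submodule R M), r₁ • v = W := by
    have h0 : r₂ • (Submodule.Quotient.mk W : QuotSMulTop r₁ M) = r₂ • 0 := by
      rw [smul_zero, ← Submodule.Quotient.mk_smul, hr₂W, Submodule.Quotient.mk_eq_zero]
      exact Submodule.smul_mem_pointwise_smul _ _ _ Submodule.mem_top
    exact (Submodule.mem_smul_pointwise_iff_exists _ _ _).mp
      ((Submodule.Quotient.mk_eq_zero _).mp (h₂ h0))
  refine ⟨v, fun b => h₁ ?_⟩
  change r₁ • w b = r₁ • x b • v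
  rw [← hxW, ← hv, smul_comm]

theorem quotDepth_le_one_of_cocycle {K σ : Type*} [Field K] [Fintype σ]
    (I : Ideal (MvPolynomial σ K)) (w : σ → MvPolynomial σ K ⧸ I)
    (hw : ∀ a b, (X a : MvPolynomial σ K) • w b = (X b : MvPolynomial σ K) • w a)
    (hv : ∀ v, ∃ a, w a ≠ (X a : MvPolynomial σ K) • v) :
    quotDepth I ≤ 1 := by
  refine csSup_le' ?_
  rintro k ⟨rs, rfl, hmem, hreg⟩
  match rs, hmem, hreg with
  | [], _, _ | [_], _, _ => simp
  | r₁ :: r₂ :: _, hmem, hreg =>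
    obtain ⟨h₁, h₂, -⟩ := by
      simpa only [RingTheory.Sequence.isWeaklyRegular_cons_iff] using hreg.toIsWeaklyRegular
    obtain ⟨v, hwv⟩ := exists_forall_eq_smul_of_isSMulRegular X (hmem r₁ (by simp))
      (hmem r₂ (by simp)) h₁ h₂ w hw
    obtain ⟨a, ha⟩ := hv v
    exact absurd (hwv a) ha

theorem Ideal.Quotient.smul_mk_eq_mk_mul {R : Type*} [CommRing R] (I : Ideal R) (r p : R) :
    r • Ideal.Quotient.mk I p = Ideal.Quotient.mk I (r * p) :=
  rfl

theorem ZMod.natCast_eq_iff_eq_val {n j : ℕ} [NeZero n] (hj : j < n) (x : ZMod n) :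
    (j : ZMod n) = x ↔ j = x.val := by
  constructor
  · rintro rfl
    exact (ZMod.val_cast_of_lt hj).symm
  · rintro rfl
    exact ZMod.natCast_zmod_val x

section MonomialIdeal

variable {σ R : Type*} [CommSemiring R]

theorem monomial_one_mem_of_mem_support {E : Set (σ →₀ ℕ)} {p : MvPolynomial σ R}
    (hp : p ∈ Ideal.span ((fun s => monomial s (1 : R)) '' E)) {ξ : σ →₀ ℕ}
    (hξ : ξ ∈ p.support) :
    monomial ξ (1 : R) ∈ Ideal.span ((fun s => monomial s (1 : R)) '' E) := by
  rw [mem_ideal_span_monomial_image] at hp ⊢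
  intro ξ' hξ'
  exact Finset.mem_singleton.mp (support_monomial_subset hξ') ▸ hp ξ hξ

theorem span_monomial_range_pow {ι : Type*} [Fintype ι] [DecidableEq ι] (f : ι → σ →₀ ℕ)
    (t : ℕ) : Ideal.span ((fun s => monomial s (1 : R)) '' Set.range f) ^ t =
      Ideal.span ((fun s => monomial s (1 : R)) ''
        ((fun m : ι → ℕ => ∑ i, m i • f i) '' {m | ∑ i, m i = t})) := by
  refine le_antisymm ?_ (Ideal.span_le.mpr ?_)
  · induction t with
    | zero =>
      rw [pow_zero, Ideal.one_eq_top, top_le_iff, Ideal.eq_top_iff_one]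
      exact Ideal.subset_span ⟨0, ⟨0, by simp, by simp⟩, by simp⟩
    | succ t ih =>
      rw [pow_succ]
      refine le_trans (Ideal.mul_mono_left ih) ?_
      rw [Ideal.span_mul_span']
      refine Ideal.span_mono ?_
      rintro _ ⟨_, ⟨_, ⟨m, hm, rfl⟩, rfl⟩, _, ⟨_, ⟨i, rfl⟩, rfl⟩, rfl⟩
      refine ⟨_, ⟨m + Pi.single i 1, ?_, rfl⟩, ?_⟩
      · simp_all [Finset.sum_add_distrib]
      · simp [monomial_mul, add_smul, Finset.sum_add_distrib, Pi.single_apply]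
  · rintro _ ⟨_, ⟨m, hm : ∑ i, m i = t, rfl⟩, rfl⟩
    change monomial (∑ i, m i • f i) (1 : R) ∈ _
    rw [monomial_sum_one, ← hm, ← Finset.prod_pow_eq_pow_sum]
    refine Ideal.prod_mem_prod fun i _ => ?_
    have hgen : monomial (f i) (1 : R) ∈
        Ideal.span ((fun s => monomial s (1 : R)) '' Set.range f) :=
      Ideal.subset_span ⟨f i, Set.mem_range_self i, rfl⟩
    simpa only [monomial_pow, one_pow] using Ideal.pow_mem_pow hgen (m i)

end MonomialIdeal

noncomputable def cycleWindow (n : ℕ) (i : ZMod n) : ZMod n →₀ ℕ :=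
  ∑ j ∈ range (n - 2), Finsupp.single (i + j) 1

theorem cyclePathIdeal_eq_span_cycleWindow (K : Type*) [Field K] (n : ℕ) :
    cyclePathIdeal K n (n - 2) =
      Ideal.span ((fun s => monomial s (1 : K)) '' Set.range (cycleWindow n)) := by
  rw [cyclePathIdeal, ← Set.range_comp]
  congr 1
  ext p
  simp only [Set.mem_ofPred_eq, Set.mem_range, Function.comp, cycleWindow, monomial_sum_one]
  exact exists_congr fun i => eq_comm

section CyclePath

variable {n : ℕ} [NeZero n]

theorem cycleWindow_apply_add_ite_add_ite (hn : 2 ≤ n) (i v : ZMod n) :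
    cycleWindow n i v + (if i = v + 1 then 1 else 0) + (if i = v + 2 then 1 else 0) = 1 := by
  have hW : cycleWindow n i v = if (v - i).val < n - 2 then 1 else 0 := by
    have key : ∀ j ∈ range (n - 2), (i + j = v ↔ j = (v - i).val) := fun j hj => by
      rw [← ZMod.natCast_eq_iff_eq_val (by simp at hj; omega), eq_sub_iff_add_eq']
    simp only [cycleWindow, Finsupp.finsetSum_apply, Finsupp.single_apply]
    rw [Finset.sum_congr rfl fun j hj => if_congr (key j hj) rfl rfl, Finset.sum_ite_eq']
    simp only [Finset.mem_range]
  have hsub : ∀ k, 0 < k → k ≤ n → (i = v + k ↔ (v - i).val = n - k) := fun k hk hkn => by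
    rw [eq_comm (a := (v - i).val), ← ZMod.natCast_eq_iff_eq_val (by omega), Nat.cast_sub hkn,
      ZMod.natCast_self]
    constructor <;> intro h <;> linear_combination h
  have h1 := hsub 1 (by omega) (by omega)
  have h2 := hsub 2 (by omega) hn
  simp only [Nat.cast_one, Nat.cast_ofNat] at h1 h2
  have := ZMod.val_lt (v - i)
  simp only [hW, h1, h2]
  split_ifs <;> omega

theorem sum_smul_cycleWindow_apply_add (hn : 2 ≤ n) (m : ZMod n → ℕ) (v : ZMod n) :
    (∑ i, m i • cycleWindow n i) v + m (v + 1) + m (v + 2) = ∑ i, m i := by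
  calc (∑ i, m i • cycleWindow n i) v + m (v + 1) + m (v + 2)
      = ∑ i, m i * (cycleWindow n i v + (if i = v + 1 then 1 else 0) +
          (if i = v + 2 then 1 else 0)) := by
        simp [Finsupp.finsetSum_apply, mul_add, Finset.sum_add_distrib]
    _ = ∑ i, m i := by simp [cycleWindow_apply_add_ite_add_ite hn]

/-- `m i` is the multiplicity of the generator `x_i ⋯ x_{i+n-3}` in a product of `t` generators;
that generator omits `x_v` exactly when `i = v + 1` or `i = v + 2`. -/
def IsCovered (t : ℕ) (ξ : ZMod n →₀ ℕ) : Prop :=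
  ∃ m : ZMod n → ℕ, ∑ i, m i = t ∧ ∀ v, t ≤ m (v + 1) + m (v + 2) + ξ v

theorem monomial_mem_cyclePathIdeal_pow_iff (K : Type*) [Field K] (hn : 2 ≤ n) (t : ℕ)
    (ξ : ZMod n →₀ ℕ) : monomial ξ (1 : K) ∈ cyclePathIdeal K n (n - 2) ^ t ↔ IsCovered t ξ := by
  classical
  rw [cyclePathIdeal_eq_span_cycleWindow, span_monomial_range_pow, mem_ideal_span_monomial_image]
  simp only [support_monomial, one_ne_zero, if_false, Finset.mem_singleton, forall_eq,
    Set.mem_image, Set.mem_ofPred_eq, Finsupp.le_def]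
  constructor
  · rintro ⟨_, ⟨m, hm, rfl⟩, hle⟩
    refine ⟨m, hm, fun v => ?_⟩
    have := sum_smul_cycleWindow_apply_add hn m v
    have := hle v
    omega
  · rintro ⟨m, hm, hcov⟩
    refine ⟨_, ⟨m, hm, rfl⟩, fun v => ?_⟩
    have := sum_smul_cycleWindow_apply_add hn m v
    have := hcov v
    omega

end CyclePath

section Parity

variable {n : ℕ} [NeZero n] (h2 : 2 ∣ n)

def parity : ZMod n →+* ZMod 2 := ZMod.castHom h2 (ZMod 2)

theorem sum_filter_parity_add_add (m : ZMod n → ℕ) (ε : ZMod 2) :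
    ∑ v ∈ univ.filter (fun v => parity h2 v = ε), (m (v + 1) + m (v + 2)) = ∑ v, m v := by
  have hshift : ∀ k : ZMod n, ∑ v ∈ univ.filter (fun v => parity h2 v = ε), m (v + k) =
      ∑ u, if parity h2 (u - k) = ε then m u else 0 := fun k => by
    rw [Finset.sum_filter]
    exact Fintype.sum_equiv (Equiv.addRight k) _ _ fun v => by simp
  -- `u - 1` and `u - 2` have different parities, so each `m u` is counted exactly once.
  have hflip : ∀ x e : ZMod 2, (x - 1 = e) ↔ ¬ (x - 2 = e) := by decide
  rw [Finset.sum_add_distrib, hshift, hshift, ← Finset.sum_add_distrib]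
  refine Finset.sum_congr rfl fun u _ => ?_
  rw [map_sub, map_sub, map_one, map_ofNat]
  by_cases h : parity h2 u - 1 = ε
  · rw [if_pos h, if_neg ((hflip _ _).mp h), add_zero]
  · rw [if_neg h, if_pos (not_not.mp (mt (hflip _ _).mpr h)), zero_add]

theorem card_filter_parity (ε : ZMod 2) :
    (univ.filter (fun v : ZMod n => parity h2 v = ε)).card = n / 2 := by
  have := sum_filter_parity_add_add h2 (fun _ => 1) ε
  simp only [Finset.sum_const, smul_eq_mul, Finset.card_univ, ZMod.card] at this
  omega

end Parity

section CoverWeight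

variable {n t : ℕ}

/-- The generator starting at `2` contains neither `x_0` nor `x_1`, so its multiplicity `t - |S|`
pays for the low entries `ζ_0 = ζ_1 = n/2 - 2` of the witness exponent. -/
def coverWeight (S : Finset (ZMod n)) (t : ℕ) (u : ZMod n) : ℕ :=
  (if u ∈ S then 1 else 0) + (if u = 2 then t - S.card else 0)

theorem sum_coverWeight [NeZero n] {S : Finset (ZMod n)} (hS : S.card ≤ t) :
    ∑ u, coverWeight S t u = t := by
  simp only [coverWeight, Finset.sum_add_distrib, Finset.sum_boole, Finset.sum_ite_eq',
    Finset.mem_univ, if_true, Finset.filter_mem_eq_inter, Finset.univ_inter, Nat.cast_id]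
  omega

theorem one_le_coverWeight {S : Finset (ZMod n)} {u : ZMod n} (hu : u ∈ S) :
    1 ≤ coverWeight S t u := by
  simp [coverWeight, hu]

theorem coverWeight_two (S : Finset (ZMod n)) :
    coverWeight S t 2 = (if 2 ∈ S then 1 else 0) + (t - S.card) := by
  simp [coverWeight]

end CoverWeight

noncomputable def witnessExponent (n t : ℕ) [NeZero n] : ZMod n →₀ ℕ :=
  Finsupp.equivFunOnFinite.symm fun v => if v = 0 ∨ v = 1 then n / 2 - 2 else t - 1

section Witness

variable {n : ℕ} [NeZero n] {t : ℕ}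

theorem witnessExponent_apply (v : ZMod n) :
    witnessExponent n t v = if v = 0 ∨ v = 1 then n / 2 - 2 else t - 1 := rfl

theorem not_isCovered_witnessExponent_add_single (hn : 4 ≤ n) (h2 : 2 ∣ n) (ht : n / 2 ≤ t + 1)
    {a : ZMod n} (ha : a = 0 ∨ a = 1) :
    ¬ IsCovered t (witnessExponent n t + Finsupp.single a 1) := by
  rintro ⟨m, hm, hcov⟩
  set c : ZMod n := 1 - a
  set F := univ.filter fun v => parity h2 v = parity h2 c
  have hcF : c ∈ F := by simp [F]
  have hne : ∀ v ∈ F, v ≠ a := by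
    rintro v hv rfl
    have : ∀ x : ZMod 2, 1 - x ≠ x := by decide
    simp only [F, c, Finset.mem_filter, map_sub, map_one] at hv
    exact this _ hv.2.symm
  have hbound : ∀ v ∈ F, 1 + (if v = c then t + 1 - n / 2 else 0) ≤ m (v + 1) + m (v + 2) := by
    intro v hv
    have hv01 : v = 0 ∨ v = 1 ↔ v = c := by
      rcases ha with rfl | rfl <;> simp [c, hne v hv]
    have := hcov v
    simp only [Finsupp.coe_add, Pi.add_apply, witnessExponent_apply, Finsupp.single_apply,
      if_neg (hne v hv).symm, hv01] at this
    split_ifs at this ⊢ <;> omega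
  have hsum : ∑ v ∈ F, (1 + if v = c then t + 1 - n / 2 else 0) = t + 1 := by
    rw [Finset.sum_add_distrib, Finset.sum_ite_eq', if_pos hcF]
    simp only [Finset.sum_const, smul_eq_mul, mul_one, F, card_filter_parity]
    omega
  have := Finset.sum_le_sum hbound
  rw [hsum, sum_filter_parity_add_add, hm] at this
  omega

theorem isCovered_witnessExponent_of_cover (ht : n / 2 ≤ t + 1) {a b : ZMod n}
    (S : Finset (ZMod n)) (hS : S.card + 1 ≤ n / 2)
    (hcover : ∀ w, w ≠ a + 1 → w ≠ b + 1 → w ∈ S ∨ w + 1 ∈ S) :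
    IsCovered t (witnessExponent n t + Finsupp.single a 1 + Finsupp.single b 1) := by
  refine ⟨coverWeight S t, sum_coverWeight (by omega), fun v => ?_⟩
  have hm2 := coverWeight_two (t := t) S
  have hextra : a = v ∨ b = v → 1 ≤ (if a = v then 1 else 0) + (if b = v then 1 else 0) := by
    rintro (h | h) <;> simp [h]
  have hcov : ¬ (a = v ∨ b = v) → v + 1 ∈ S ∨ v + 2 ∈ S := fun hab => by
    simpa only [add_assoc, one_add_one_eq_two] using
      hcover (v + 1) (fun h => hab (Or.inl (add_right_cancel h).symm))
        (fun h => hab (Or.inr (add_right_cancel h).symm))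
  simp only [Finsupp.coe_add, Pi.add_apply, witnessExponent_apply, Finsupp.single_apply]
  by_cases hv0 : v = 0
  · subst hv0
    simp only [zero_add, true_or, if_true] at hcov ⊢
    by_cases hab : a = 0 ∨ b = 0
    · have := hextra hab
      split_ifs at hm2 <;> omega
    · rcases hcov hab with h | h
      · have := one_le_coverWeight (t := t) h
        split_ifs at hm2 <;> omega
      · rw [if_pos h] at hm2
        omega
  by_cases hv1 : v = 1
  · subst hv1
    simp only [one_add_one_eq_two, or_true, if_true] at hcov ⊢
    by_cases hab : a = 1 ∨ b = 1
    · have := hextra hab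
      split_ifs at hm2 <;> omega
    · rcases hcov hab with h | h
      · rw [if_pos h] at hm2
        omega
      · have := one_le_coverWeight (t := t) h
        split_ifs at hm2 <;> omega
  · simp only [hv0, hv1, or_self, if_false]
    by_cases hab : a = v ∨ b = v
    · have := hextra hab
      omega
    · rcases hcov hab with h | h <;> have := one_le_coverWeight (t := t) h <;> omega

end Witness

section Cover

/-- For `b = a + L` with `L` odd, `a + coverOffset L r` for `r < n / 2 - 1` runs through
`a + 3, a + 5, …, a + L = b` and then `b + 3, b + 5, …, b + (n - L) = a`. -/
def coverOffset (L r : ℕ) : ℕ := 2 * r + 3 + if L < 2 * r + 3 then 1 else 0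

theorem exists_coverOffset_eq {n L q : ℕ} (hn : n % 2 = 0) (hL : L % 2 = 1) (hLn : L < n)
    (hq : 0 < q) (hqn : q < n) (hqL : q ≠ L) :
    ∃ r < n / 2 - 1, coverOffset L r = q + 1 ∨ coverOffset L r = q + 2 := by
  unfold coverOffset
  rcases Nat.lt_or_gt_of_ne hqL with h | h
  · exact ⟨(q - 1) / 2, by omega, by split_ifs <;> omega⟩
  · exact ⟨(q - 2) / 2, by omega, by split_ifs <;> omega⟩

variable {n : ℕ} [NeZero n] (h2 : 2 ∣ n)

theorem exists_cover {a b : ZMod n} (hab : parity h2 (b - a) = 1) :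
    ∃ S : Finset (ZMod n), S.card + 1 ≤ n / 2 ∧
      ∀ w, w ≠ a + 1 → w ≠ b + 1 → w ∈ S ∨ w + 1 ∈ S := by
  set L := (b - a).val
  have hL : L % 2 = 1 := by
    rw [← Nat.odd_iff, ← ZMod.natCast_eq_one_iff_odd, ← hab, ← map_natCast (parity h2),
      ZMod.natCast_zmod_val]
  have hn : n % 2 = 0 := Nat.mod_eq_zero_of_dvd h2
  have hn0 : 0 < n := Nat.pos_of_neZero n
  refine ⟨(range (n / 2 - 1)).image fun r => a + (coverOffset L r : ZMod n),
    (Nat.add_le_of_le_sub (by omega) (Finset.card_image_le.trans (Finset.card_range _).le)),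
    fun w hwa hwb => ?_⟩
  set q := (w - a - 1).val
  have hq : 0 < q := by
    rw [Nat.pos_iff_ne_zero, Ne, ZMod.val_eq_zero, sub_sub, sub_eq_zero]
    exact hwa
  have hqL : q ≠ L := fun h => hwb (by
    have := ZMod.val_injective n h
    linear_combination this)
  have hw : ((q : ℕ) : ZMod n) = w - a - 1 := ZMod.natCast_zmod_val _
  obtain ⟨r, hr, hro⟩ := exists_coverOffset_eq hn hL (ZMod.val_lt _) hq (ZMod.val_lt _) hqL
  simp only [Finset.mem_image, Finset.mem_range]
  rcases hro with h | h
  · exact Or.inl ⟨r, hr, by rw [h]; push_cast; rw [hw]; ring⟩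
  · exact Or.inr ⟨r, hr, by rw [h]; push_cast; rw [hw]; ring⟩

end Cover

section Depth

variable {K : Type*} [Field K] {n : ℕ} [NeZero n] {t : ℕ}

theorem isCovered_of_mem_support (hn : 2 ≤ n) {p : MvPolynomial (ZMod n) K}
    (hp : p ∈ cyclePathIdeal K n (n - 2) ^ t) {ξ : ZMod n →₀ ℕ} (hξ : ξ ∈ p.support) :
    IsCovered t ξ := by
  rw [← monomial_mem_cyclePathIdeal_pow_iff K hn]
  rw [cyclePathIdeal_eq_span_cycleWindow, span_monomial_range_pow] at hp ⊢
  exact monomial_one_mem_of_mem_support hp hξ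

theorem monomial_witnessExponent_add_single_add_single_mem (h2 : 2 ∣ n) (ht : n / 2 ≤ t + 1)
    {a b : ZMod n} (ha : parity h2 a = 0) (hb : parity h2 b = 1) :
    monomial (witnessExponent n t + Finsupp.single a 1 + Finsupp.single b 1) (1 : K) ∈
      cyclePathIdeal K n (n - 2) ^ t := by
  obtain ⟨S, hS, hcover⟩ := exists_cover h2 (a := a) (b := b) (by rw [map_sub, ha, hb, sub_zero])
  rw [monomial_mem_cyclePathIdeal_pow_iff K (Nat.le_of_dvd (Nat.pos_of_neZero n) h2)]
  exact isCovered_witnessExponent_of_cover ht S hS hcover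

variable (K t) in
noncomputable def witnessCocycle (h2 : 2 ∣ n) :
    ZMod n → MvPolynomial (ZMod n) K ⧸ cyclePathIdeal K n (n - 2) ^ t := fun a =>
  if parity h2 a = 0 then Ideal.Quotient.mk _ (X a * monomial (witnessExponent n t) 1) else 0

theorem X_smul_witnessCocycle_comm (h2 : 2 ∣ n) (ht : n / 2 ≤ t + 1) (a b : ZMod n) :
    (X a : MvPolynomial (ZMod n) K) • witnessCocycle K t h2 b =
      (X b : MvPolynomial (ZMod n) K) • witnessCocycle K t h2 a := by
  have hmem : ∀ a b, parity h2 a = 0 → parity h2 b = 1 →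
      X b * (X a * monomial (witnessExponent n t) 1) ∈ cyclePathIdeal K n (n - 2) ^ t := by
    intro a b ha hb
    convert monomial_witnessExponent_add_single_add_single_mem (K := K) h2 ht ha hb using 1
    simp only [X, monomial_mul, one_mul]
    congr 1
    ac_rfl
  have hpar : ∀ x : ZMod 2, x = 0 ∨ x = 1 := by decide
  rcases hpar (parity h2 a) with ha | ha <;> rcases hpar (parity h2 b) with hb | hb <;>
    simp only [witnessCocycle, ha, hb, if_true, one_ne_zero, if_false, smul_zero,
      Ideal.Quotient.smul_mk_eq_mk_mul]
  · rw [mul_left_comm]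
  · rw [eq_comm, Ideal.Quotient.eq_zero_iff_mem]
    exact hmem a b ha hb
  · rw [Ideal.Quotient.eq_zero_iff_mem]
    exact hmem b a hb ha

theorem witnessCocycle_ne_X_smul (hn : 4 ≤ n) (h2 : 2 ∣ n) (ht : n / 2 ≤ t + 1)
    (v : MvPolynomial (ZMod n) K ⧸ cyclePathIdeal K n (n - 2) ^ t) :
    ∃ a, witnessCocycle K t h2 a ≠ (X a : MvPolynomial (ZMod n) K) • v := by
  obtain ⟨p, rfl⟩ := Ideal.Quotient.mk_surjective v
  set ζ := witnessExponent n t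
  set Z : MvPolynomial (ZMod n) K := monomial ζ 1
  by_contra! hp
  have h0 : X 0 * (Z - p) ∈ cyclePathIdeal K n (n - 2) ^ t := by
    have := hp 0
    simp only [witnessCocycle, map_zero, if_true, Ideal.Quotient.smul_mk_eq_mk_mul] at this
    rw [mul_sub, ← Ideal.Quotient.eq, this]
  have h1 : X 1 * p ∈ cyclePathIdeal K n (n - 2) ^ t := by
    have := hp 1
    simp only [witnessCocycle, map_one, one_ne_zero, if_false,
      Ideal.Quotient.smul_mk_eq_mk_mul] at this
    rw [← Ideal.Quotient.eq_zero_iff_mem, ← this]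
  have hX : ∀ a q, X a * q ∈ cyclePathIdeal K n (n - 2) ^ t → ζ ∈ q.support →
      IsCovered t (ζ + Finsupp.single a 1) := fun a q hq hζ => by
    rw [add_comm]
    exact isCovered_of_mem_support (by omega) hq
      (by rwa [mem_support_iff, coeff_X_mul, ← mem_support_iff])
  have hζ : ζ ∈ (Z - p).support ∨ ζ ∈ p.support := by
    by_contra! h
    simp only [mem_support_iff, not_not, coeff_sub, Z, coeff_monomial, if_true] at h
    simp [h.2] at h
  rcases hζ with hζ | hζ
  · exact not_isCovered_witnessExponent_add_single hn h2 ht (Or.inl rfl) (hX 0 _ h0 hζ)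
  · exact not_isCovered_witnessExponent_add_single hn h2 ht (Or.inr rfl) (hX 1 _ h1 hζ)

theorem quotDepth_cyclePathIdeal_pow_le_one (hn : 4 ≤ n) (h2 : 2 ∣ n) (ht : n / 2 ≤ t + 1) :
    quotDepth (cyclePathIdeal K n (n - 2) ^ t) ≤ 1 :=
  quotDepth_le_one_of_cocycle _ _ (X_smul_witnessCocycle_comm h2 ht)
    (witnessCocycle_ne_X_smul hn h2 ht)

end Depth

/-- If `n ≥ 4` is even, then `depth(S/J_{n,n-2}^t) ≤ 1` for all `t ≥ n - 1`. -/
theorem depth_le_one_even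
    (K : Type*) [Field K] (n : ℕ) (hn : 4 ≤ n) (heven : Even n)
    (t : ℕ) (ht : n - 1 ≤ t) :
    quotDepth ((cyclePathIdeal K n (n - 2)) ^ t) ≤ 1 := by
  have : NeZero n := ⟨by omega⟩
  exact quotDepth_cyclePathIdeal_pow_le_one hn heven.two_dvd (by omega)
end

section
/- Let n ≥ 4 and t ≥ 1 be integers. For every 0 ≤ j ≤ t one has the colon ideal equality (J_{n,n−1}^t : x_n^j) = J_{n,n−1}^{t−j} · (J_{n−1,n−2} S)^j, where J_{n−1,n−2} S denotes the extension to S of the (n−2)-path ideal of the cycle of length n−1 on the variables x_1,…,x_{n−1}. -/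
open MvPolynomial

/-- The `m'`-path ideal of the cycle graph of length `n'` on the variables
`x_0, …, x_{n'-1}`, viewed inside `K[x_0, …, x_{n-1}]`: generated by the `n'` monomials
`x_i x_{i+1} ⋯ x_{i+m'-1}`, indices taken modulo `n'`. -/
noncomputable def cyclePathIdealIn (K : Type*) [Field K] (n n' m' : ℕ) :
    Ideal (MvPolynomial (ZMod n) K) :=
  Ideal.span { p | ∃ i : ℕ, i < n' ∧
    p = ∏ j ∈ Finset.range m', X ((((i + j) % n' : ℕ)) : ZMod n) }

/-!
Write `y = x_{n-1}`. The generators of `J = J_{n,n-1}` are the products of all variables but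
one: they are `y ⬝ ℓ` for the generators `ℓ` of `L = J_{n-1,n-2} S`, together with the product `Q`
of all variables but `y`. Hence `J = y L + (Q)` with `(Q) ⊆ L`, and expanding
`J^{m+1} ⊆ y L J^m + (Q)^{m+1}` shows `J^{m+1} L^i ⊆ y J^m L^{i+1} + (Q)^{m+1} L^i`. The last
ideal is extended from `K[x_k : k ≠ n-1]`, so `y` is a nonzerodivisor modulo it; this gives
`(J^{m+1} L^i : y) = J^m L^{i+1}`, and iterating `j` times proves the theorem.
-/

open Finset

theorem Polynomial.mem_map_C_of_mul_X_mem {R : Type*} [CommSemiring R] {I : Ideal R}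
    {p : Polynomial R} (h : p * Polynomial.X ∈ I.map Polynomial.C) : p ∈ I.map Polynomial.C := by
  rw [Ideal.mem_map_C_iff] at h ⊢
  intro d
  simpa only [Polynomial.coeff_mul_X] using h (d + 1)

namespace MvPolynomial

variable {R σ : Type*} [CommSemiring R]

theorem mem_map_rename_of_mul_X_mem {a : σ} {I : Ideal (MvPolynomial {b // b ≠ a} R)}
    {p : MvPolynomial σ R} (h : p * X a ∈ I.map (rename Subtype.val)) :
    p ∈ I.map (rename Subtype.val) := by
  classical
  let ψ := ((renameEquiv R (Equiv.optionSubtypeNe a).symm).trans (optionEquivLeft R _)).toRingEquiv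
  have hψ : (I.map (rename Subtype.val)).map ψ = I.map Polynomial.C := by
    rw [← Ideal.map_coe (rename Subtype.val), ← Ideal.map_coe ψ, Ideal.map_map]
    congr 1
    refine MvPolynomial.ringHom_ext (fun r => ?_) (fun b => ?_)
    · simp [ψ]
    · simp [ψ, Equiv.optionSubtypeNe_symm_of_ne b.2]
  have hX : ψ (X a) = Polynomial.X := by simp [ψ]
  rw [← Ideal.apply_mem_of_equiv_iff (f := ψ), hψ] at h ⊢
  rw [map_mul, hX] at h
  exact Polynomial.mem_map_C_of_mul_X_mem h

theorem prod_X_mem_range_rename {a : σ} {t : Finset σ} (ha : a ∉ t) :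
    ∏ k ∈ t, X k ∈ (rename (R := R) (Subtype.val : {b // b ≠ a} → σ)).range :=
  Subalgebra.prod_mem _ fun k hk => ⟨X ⟨k, ne_of_mem_of_not_mem hk ha⟩, rename_X _ _⟩

end MvPolynomial

namespace Ideal

variable {R : Type*} [CommRing R]

theorem sup_pow_succ_le (U V : Ideal R) (s : ℕ) :
    (U ⊔ V) ^ (s + 1) ≤ U * (U ⊔ V) ^ s ⊔ V ^ (s + 1) := by
  induction s with
  | zero => simp
  | succ s ih =>
    calc (U ⊔ V) ^ (s + 2) = U * (U ⊔ V) ^ (s + 1) ⊔ V * (U ⊔ V) ^ (s + 1) := by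
          rw [pow_succ' _ (s + 1), sup_mul]
      _ ≤ U * (U ⊔ V) ^ (s + 1) ⊔ V * (U * (U ⊔ V) ^ s ⊔ V ^ (s + 1)) := by gcongr
      _ = U * (U ⊔ V) ^ (s + 1) ⊔ V * (U * (U ⊔ V) ^ s) ⊔ V ^ (s + 2) := by
          rw [mul_sup, ← pow_succ' V (s + 1), sup_assoc]
      _ ≤ U * (U ⊔ V) ^ (s + 1) ⊔ V ^ (s + 2) := by
          gcongr
          refine sup_le le_rfl ?_
          rw [mul_left_comm, pow_succ' _ s]
          exact mul_mono_right (mul_mono_left le_sup_right)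

theorem colon_span_singleton_le {I E F : Ideal R} {x : R} (hx : ∀ r, r * x ∈ E → r ∈ E)
    (hI : I ≤ span {x} * F ⊔ E) (hEF : E ≤ F) : I.colon (span {x}) ≤ F := by
  intro r hr
  rw [mem_colon_span_singleton] at hr
  obtain ⟨_, hp, q, hq, hpq⟩ := Submodule.mem_sup.1 (hI hr)
  obtain ⟨z, hz, rfl⟩ := mem_span_singleton_mul.1 hp
  have hrz : (r - z) * x ∈ E := by rwa [sub_mul, ← hpq, mul_comm z, add_sub_cancel_left]
  simpa using add_mem hz (hEF (hx _ hrz))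

theorem le_colon_span_singleton {I F : Ideal R} {x : R} (h : F * span {x} ≤ I) :
    F ≤ I.colon (span {x}) := fun _ hr =>
  mem_colon_span_singleton.2 (h (mul_mem_mul hr (mem_span_singleton_self x)))

theorem colon_span_singleton_pow_succ (I : Ideal R) (x : R) (j : ℕ) :
    I.colon (span {x ^ (j + 1)}) = (I.colon (span {x})).colon (span {x ^ j}) := by
  ext r
  simp only [mem_colon_span_singleton, pow_succ, mul_assoc]

theorem span_mem_range_map {A B F : Type*} [CommSemiring A] [CommSemiring B] [FunLike F A B]
    [RingHomClass F A B] (f : F) {G : Set B} (hG : G ⊆ Set.range f) :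
    span G ∈ Set.range (map f : Ideal A → Ideal B) :=
  ⟨span (f ⁻¹' G), by rw [map_span, Set.image_preimage_eq_of_subset hG]⟩

variable {J L V : Ideal R} {x : R}

theorem colon_pow_succ_mul_pow (hJ : J = span {x} * L ⊔ V) (hVL : V ≤ L) {m i : ℕ}
    (hx : ∀ r, r * x ∈ V ^ (m + 1) * L ^ i → r ∈ V ^ (m + 1) * L ^ i) :
    (J ^ (m + 1) * L ^ i).colon (span {x}) = J ^ m * L ^ (i + 1) := by
  have hVJ : V ≤ J := hJ ▸ le_sup_right
  refine le_antisymm (colon_span_singleton_le hx ?_ ?_) (le_colon_span_singleton ?_)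
  · calc J ^ (m + 1) * L ^ i ≤ (span {x} * L * J ^ m ⊔ V ^ (m + 1)) * L ^ i := by
          rw [hJ]; gcongr; exact sup_pow_succ_le _ _ m
      _ = span {x} * (J ^ m * L ^ (i + 1)) ⊔ V ^ (m + 1) * L ^ i := by
          rw [sup_mul]; ring_nf
  · calc V ^ (m + 1) * L ^ i = V ^ m * L ^ i * V := by ring
      _ ≤ J ^ m * L ^ i * L := by gcongr
      _ = J ^ m * L ^ (i + 1) := by ring
  · calc J ^ m * L ^ (i + 1) * span {x} = J ^ m * L ^ i * (span {x} * L) := by ring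
      _ ≤ J ^ m * L ^ i * J := by rw [hJ]; gcongr; exact le_sup_left
      _ = J ^ (m + 1) * L ^ i := by ring

theorem colon_pow_add_mul_pow (hJ : J = span {x} * L ⊔ V) (hVL : V ≤ L)
    (hx : ∀ m i r, r * x ∈ V ^ m * L ^ i → r ∈ V ^ m * L ^ i) (m i j : ℕ) :
    (J ^ (m + j) * L ^ i).colon (span {x ^ j}) = J ^ m * L ^ (i + j) := by
  induction j generalizing i with
  | zero => ext r; simp
  | succ j ih =>
    rw [colon_span_singleton_pow_succ, ← add_assoc, colon_pow_succ_mul_pow hJ hVL (hx _ _), ih,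
      add_right_comm, add_assoc]

end Ideal

namespace MvPolynomial

variable {R σ : Type*} [CommRing R] [DecidableEq σ]

variable (R) in
noncomputable def prodEraseIdeal (s : Finset σ) : Ideal (MvPolynomial σ R) :=
  Ideal.span ((fun c => ∏ k ∈ s.erase c, X k) '' s)

theorem prodEraseIdeal_eq_sup {s : Finset σ} {a : σ} (ha : a ∈ s) :
    prodEraseIdeal R s =
      Ideal.span {X a} * prodEraseIdeal R (s.erase a) ⊔ Ideal.span {∏ k ∈ s.erase a, X k} := by
  have hs : (s : Set σ) = insert a ↑(s.erase a) := by
    rw [← Finset.coe_insert, Finset.insert_erase ha]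
  have hgen : ∀ c ∈ (s.erase a : Set σ),
      ∏ k ∈ s.erase c, X k = X a * ∏ k ∈ (s.erase a).erase c, (X k : MvPolynomial σ R) :=
    fun c hc => by
      rw [Finset.erase_right_comm, Finset.mul_prod_erase _ _
        (Finset.mem_erase.2 ⟨(Finset.ne_of_mem_erase hc).symm, ha⟩)]
  rw [prodEraseIdeal, prodEraseIdeal, hs, Set.image_insert_eq, Ideal.span_insert,
    Ideal.span_mul_span', Set.singleton_mul, Set.image_image, sup_comm, Set.image_congr hgen]

theorem prod_X_mem_prodEraseIdeal {t : Finset σ} (ht : t.Nonempty) :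
    ∏ k ∈ t, X k ∈ prodEraseIdeal R t := by
  obtain ⟨b, hb⟩ := ht
  rw [← Finset.mul_prod_erase t X hb]
  exact Ideal.mul_mem_left _ _ (Ideal.subset_span ⟨b, hb, rfl⟩)

theorem prodEraseIdeal_mem_range_map_rename {a : σ} {t : Finset σ} (ha : a ∉ t) :
    prodEraseIdeal R t ∈ Set.range (Ideal.map (rename (Subtype.val : {b // b ≠ a} → σ))) :=
  Ideal.span_mem_range_map _ <| by
    rintro _ ⟨c, -, rfl⟩
    exact prod_X_mem_range_rename fun h => ha (Finset.mem_of_mem_erase h)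

theorem colon_prodEraseIdeal_pow {s : Finset σ} {a : σ} (ha : a ∈ s) (hs : (s.erase a).Nonempty)
    (m i j : ℕ) :
    (prodEraseIdeal R s ^ (m + j) * prodEraseIdeal R (s.erase a) ^ i).colon
        (Ideal.span {(X a ^ j : MvPolynomial σ R)}) =
      prodEraseIdeal R s ^ m * prodEraseIdeal R (s.erase a) ^ (i + j) := by
  have ha' : a ∉ s.erase a := Finset.notMem_erase a s
  obtain ⟨V₀, hV⟩ := Ideal.span_mem_range_map (rename (R := R) (Subtype.val : {b // b ≠ a} → σ))
    (Set.singleton_subset_iff.2 (prod_X_mem_range_rename ha'))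
  obtain ⟨L₀, hL⟩ := prodEraseIdeal_mem_range_map_rename (R := R) ha'
  refine Ideal.colon_pow_add_mul_pow (prodEraseIdeal_eq_sup ha) ?_ ?_ m i j
  · exact (Ideal.span_singleton_le_iff_mem _).2 (prod_X_mem_prodEraseIdeal hs)
  · intro m i r hr
    rw [← hV, ← hL, ← Ideal.map_pow, ← Ideal.map_pow, ← Ideal.map_mul] at hr ⊢
    exact mem_map_rename_of_mul_X_mem hr

end MvPolynomial

theorem Finset.image_range_eq_of_injOn {α : Type*} [DecidableEq α] {f : ℕ → α} {N : ℕ}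
    {s : Finset α} (hf : Set.InjOn f (range N)) (hmaps : ∀ j < N, f j ∈ s) (hcard : #s ≤ N) :
    (range N).image f = s := by
  refine eq_of_subset_of_card_le ?_ (by rwa [card_image_of_injOn hf, card_range])
  rintro _ hx
  obtain ⟨j, hj, rfl⟩ := mem_image.1 hx
  exact hmaps j (mem_range.1 hj)

theorem Finset.prod_range_pred_eq_prod_erase {α M : Type*} [DecidableEq α] [CommMonoid M]
    (g : α → M) {f : ℕ → α} {N : ℕ} (hN : 0 < N) (hf : Set.InjOn f (range N)) :
    ∏ j ∈ range (N - 1), g (f j) = ∏ k ∈ ((range N).image f).erase (f (N - 1)), g k := by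
  obtain ⟨N, rfl⟩ : ∃ M, N = M + 1 := ⟨N - 1, by omega⟩
  have hfN : f N ∉ (range N).image f := by
    simp only [mem_image, mem_range, not_exists, not_and]
    intro j hj h
    exact hj.ne (hf (by simp; omega) (by simp) h)
  rw [Nat.add_sub_cancel, range_add_one, image_insert, erase_insert hfN,
    prod_image (hf.mono (by simp))]

theorem ZMod.natCast_injOn_range (n : ℕ) : Set.InjOn (Nat.cast : ℕ → ZMod n) (range n) :=
  fun a ha b hb h => by
    rwa [ZMod.natCast_eq_natCast_iff', Nat.mod_eq_of_lt (mem_range.1 ha),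
      Nat.mod_eq_of_lt (mem_range.1 hb)] at h

section Cycle

variable (K : Type*) [Field K] (n : ℕ) [NeZero n]

theorem cyclePathIdeal_pred_eq_prodEraseIdeal :
    cyclePathIdeal K n (n - 1) = prodEraseIdeal K (univ : Finset (ZMod n)) := by
  have hgen : ∀ i : ZMod n, ∏ j ∈ range (n - 1), (X (i + (j : ZMod n)) : MvPolynomial _ K) =
      ∏ k ∈ univ.erase (i + ((n - 1 : ℕ) : ZMod n)), X k := by
    intro i
    have hinj : Set.InjOn (fun j : ℕ => i + (j : ZMod n)) (range n) :=
      fun a ha b hb h => ZMod.natCast_injOn_range n ha hb (add_left_cancel h)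
    rw [prod_range_pred_eq_prod_erase X (NeZero.pos n) hinj,
      image_range_eq_of_injOn hinj (fun _ _ => mem_univ _) (by simp)]
  have hgens :
      {p | ∃ i : ZMod n, p = ∏ j ∈ range (n - 1), (X (i + (j : ZMod n)) : MvPolynomial _ K)} =
        Set.range ((fun c => ∏ k ∈ univ.erase c, X k) ∘ (· + ((n - 1 : ℕ) : ZMod n))) := by
    ext p
    simp [hgen, eq_comm]
  rw [cyclePathIdeal, prodEraseIdeal, hgens, (add_right_surjective _).range_comp, coe_univ,
    Set.image_univ]

theorem cyclePathIdealIn_eq_prodEraseIdeal (hn : 2 ≤ n) :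
    cyclePathIdealIn K n (n - 1) (n - 2) =
      prodEraseIdeal K (univ.erase ((n - 1 : ℕ) : ZMod n)) := by
  rw [cyclePathIdealIn, prodEraseIdeal]
  set f : ℕ → ℕ → ZMod n := fun i j => (((i + j) % (n - 1) : ℕ) : ZMod n) with hf
  have hmod (i j : ℕ) : (i + j) % (n - 1) < n - 1 := Nat.mod_lt _ (by omega)
  have hmem (i j : ℕ) : (i + j) % (n - 1) ∈ (range n : Set ℕ) := by
    simpa using (hmod i j).trans_le (Nat.sub_le n 1)
  have hinj (i : ℕ) : Set.InjOn (f i) (range (n - 1)) := by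
    intro a ha b hb h
    have hab := ZMod.natCast_injOn_range n (hmem i a) (hmem i b) h
    exact (Nat.ModEq.add_left_cancel' i hab).eq_of_lt_of_lt (by simpa using ha) (by simpa using hb)
  have himage (i : ℕ) : (range (n - 1)).image (f i) = univ.erase ((n - 1 : ℕ) : ZMod n) := by
    refine image_range_eq_of_injOn (hinj i) (fun j _ => mem_erase.2 ⟨fun h => ?_, mem_univ _⟩)
      (by rw [card_erase_of_mem (mem_univ _), card_univ, ZMod.card])
    exact (hmod i j).ne (ZMod.natCast_injOn_range n (hmem i j) (by simp; omega) h)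
  have hgen (i : ℕ) : ∏ j ∈ range (n - 2), (X (f i j) : MvPolynomial _ K) =
      ∏ k ∈ (univ.erase ((n - 1 : ℕ) : ZMod n)).erase (f (n - 2) i), X k := by
    rw [← himage i, show n - 2 = n - 1 - 1 by omega,
      prod_range_pred_eq_prod_erase X (by omega) (hinj i)]
    simp only [hf, add_comm]
  have hgens : {p | ∃ i, i < n - 1 ∧ p = ∏ j ∈ range (n - 2), (X (f i j) : MvPolynomial _ K)} =
      (fun c => ∏ k ∈ (univ.erase ((n - 1 : ℕ) : ZMod n)).erase c, X k) ''
        ((range (n - 1)).image (f (n - 2))) := by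
    ext p
    simp [hgen, eq_comm]
  rw [hgens, himage]

end Cycle

theorem colon_xn_pow_eq_general
    (K : Type*) [Field K] (n t : ℕ) (hn : 4 ≤ n)
    (j : ℕ) (hj : j ≤ t) :
    ((cyclePathIdeal K n (n - 1)) ^ t).colon
        (Ideal.span {((X (((n - 1 : ℕ) : ZMod n))) ^ j : MvPolynomial (ZMod n) K)}) =
      (cyclePathIdeal K n (n - 1)) ^ (t - j) * (cyclePathIdealIn K n (n - 1) (n - 2)) ^ j := by
  have : NeZero n := ⟨by omega⟩
  have hs : ((univ : Finset (ZMod n)).erase ((n - 1 : ℕ) : ZMod n)).Nonempty := by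
    rw [← card_pos, card_erase_of_mem (mem_univ _), card_univ, ZMod.card]
    omega
  obtain ⟨m, rfl⟩ : ∃ m, t = m + j := ⟨t - j, by omega⟩
  have key := colon_prodEraseIdeal_pow (R := K) (mem_univ _) hs m 0 j
  rw [pow_zero, mul_one, zero_add] at key
  rw [cyclePathIdeal_pred_eq_prodEraseIdeal, cyclePathIdealIn_eq_prodEraseIdeal K n (by omega),
    Nat.add_sub_cancel]
  exact key

/-- For `n ≥ 4`, `t ≥ 1` and `0 ≤ j ≤ t`:
`(J_{n,n-1}^t : x_n^j) = J_{n,n-1}^{t-j} ⬝ (J_{n-1,n-2} S)^j`. -/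
theorem colon_xn_pow_eq
    (K : Type*) [Field K] (n t : ℕ) (hn : 4 ≤ n) (ht : 1 ≤ t)
    (j : ℕ) (hj : j ≤ t) :
    ((cyclePathIdeal K n (n - 1)) ^ t).colon
        (Ideal.span {((X (((n - 1 : ℕ) : ZMod n))) ^ j : MvPolynomial (ZMod n) K)}) =
      (cyclePathIdeal K n (n - 1)) ^ (t - j) * (cyclePathIdealIn K n (n - 1) (n - 2)) ^ j :=
  colon_xn_pow_eq_general K n t hn j hj
end

section
/- Let m, t ≥ 2 be integers and n = mt − 1. Then depth(S/J_{n,m}^s) = 0 for all integers s ≥ t. -/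
open MvPolynomial

/-! The class of `u = x_0 ⋯ x_{n-1} · (x_0 ⋯ x_{m-1})^(s-t)` is a nonzero socle element of
`S/J^s`. Since `n + 1 = mt`, each `x_i · x_0 ⋯ x_{n-1}` is a path of `mt` consecutive variables
around the cycle, hence a product of `t` generators, so `x_i u ∈ J^s`. On the other hand `u ∉ J^s`:
after specializing every variable to a single variable `X`, each element of `J^s` becomes
divisible by `X^(ms)`, while `u` becomes `X^(ms-1)`. So every element of the maximal ideal
kills the nonzero class of `u`, and no regular sequence can even start. -/

open Finset

lemma ZMod.prod_range_natCast {M : Type*} [CommMonoid M] {n : ℕ} [NeZero n]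
    (f : ZMod n → M) : ∏ l ∈ range n, f l = ∏ a, f a :=
  prod_nbij' (fun l => (l : ZMod n)) ZMod.val (fun _ _ => mem_univ _)
    (fun a _ => mem_range.mpr a.val_lt)
    (fun _ hl => ZMod.val_natCast_of_lt (mem_range.mp hl))
    (fun a _ => ZMod.natCast_zmod_val a) (fun _ _ => rfl)

lemma quotDepth_eq_zero_of_X_mul_mem {K σ : Type*} [Field K] {I : Ideal (MvPolynomial σ K)}
    {u : MvPolynomial σ K} (hu : u ∉ I) (hXu : ∀ i, X i * u ∈ I) : quotDepth I = 0 := by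
  have hmax : ∀ r ∈ maxIdeal K σ, r * u ∈ I := by
    suffices maxIdeal K σ ≤ Submodule.comap (LinearMap.mulRight _ u) I from fun r hr => this hr
    rw [maxIdeal, Ideal.span_le]
    rintro _ ⟨i, rfl⟩
    exact hXu i
  have not_regular : ∀ r ∈ maxIdeal K σ, ¬IsSMulRegular (MvPolynomial σ K ⧸ I) r := by
    intro r hr hreg
    refine hu (Ideal.Quotient.eq_zero_iff_mem.mp (hreg ?_))
    change Ideal.Quotient.mk I (r * u) = r • 0
    rw [smul_zero, Ideal.Quotient.eq_zero_iff_mem]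
    exact hmax r hr
  refine Nat.le_zero.mp (csSup_le' ?_)
  rintro k ⟨_ | ⟨r, rs⟩, rfl, hmem, hreg⟩
  · rfl
  · rw [RingTheory.Sequence.isRegular_cons_iff] at hreg
    exact absurd hreg.1 (not_regular r (hmem r List.mem_cons_self))

section CyclePathIdeal

variable {K : Type*} [Field K] {n m : ℕ}

lemma prod_X_mem_cyclePathIdeal (i : ZMod n) :
    ∏ j ∈ range m, (X (i + j) : MvPolynomial (ZMod n) K) ∈ cyclePathIdeal K n m :=
  Ideal.subset_span ⟨i, rfl⟩

lemma prod_X_mem_cyclePathIdeal_pow (i : ZMod n) (t : ℕ) :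
    ∏ l ∈ range (m * t), (X (i + l) : MvPolynomial (ZMod n) K) ∈ cyclePathIdeal K n m ^ t := by
  induction t with
  | zero => simp
  | succ t ih =>
    rw [Nat.mul_succ, prod_range_add, pow_succ]
    refine Ideal.mul_mem_mul ih ?_
    simpa only [Nat.cast_add, add_assoc] using
      prod_X_mem_cyclePathIdeal (i + ((m * t : ℕ) : ZMod n))

lemma X_mul_prod_univ_X_mem_cyclePathIdeal_pow {t : ℕ} (hn : n + 1 = m * t) [NeZero n]
    (i : ZMod n) :
    X i * ∏ a, (X a : MvPolynomial (ZMod n) K) ∈ cyclePathIdeal K n m ^ t := by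
  have hpath : X i * ∏ a, (X a : MvPolynomial (ZMod n) K) = ∏ l ∈ range (n + 1), X (i + l) := by
    rw [prod_range_succ, ZMod.natCast_self, add_zero, mul_comm,
      ZMod.prod_range_natCast (fun a => X (i + a))]
    exact congrArg (· * X i) (Equiv.prod_comp (Equiv.addLeft i) X).symm
  rw [hpath, hn]
  exact prod_X_mem_cyclePathIdeal_pow i t

lemma X_pow_dvd_aeval_X_of_mem_cyclePathIdeal_pow {s : ℕ} {p : MvPolynomial (ZMod n) K}
    (hp : p ∈ cyclePathIdeal K n m ^ s) :
    Polynomial.X ^ (m * s) ∣ aeval (R := K) (fun _ => (Polynomial.X : Polynomial K)) p := by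
  set φ := aeval (R := K) (fun _ : ZMod n => (Polynomial.X : Polynomial K))
  have hJ : cyclePathIdeal K n m ≤ (Ideal.span {Polynomial.X ^ m}).comap φ := by
    rw [cyclePathIdeal, Ideal.span_le]
    rintro _ ⟨i, rfl⟩
    simp [φ]
  have hs := Ideal.le_comap_pow φ s (Ideal.pow_right_mono hJ s hp)
  rwa [Ideal.mem_comap, Ideal.span_singleton_pow, Ideal.mem_span_singleton, ← pow_mul] at hs

end CyclePathIdeal

/-- For `m, t ≥ 2` and `n = mt - 1`, `depth(S/J_{n,m}^s) = 0` for all `s ≥ t`. -/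
theorem depth_eq_zero_of_n_eq_mt_sub_one
    (K : Type*) [Field K] (n m t : ℕ) (hm : 2 ≤ m) (ht : 2 ≤ t) (hn : n = m * t - 1)
    (s : ℕ) (hs : t ≤ s) :
    quotDepth ((cyclePathIdeal K n m) ^ s) = 0 := by
  have hmt : 4 ≤ m * t := Nat.mul_le_mul hm ht
  have hn1 : n + 1 = m * t := by omega
  have : NeZero n := ⟨by omega⟩
  set g : MvPolynomial (ZMod n) K := ∏ j ∈ range m, X ((0 : ZMod n) + j)
  apply quotDepth_eq_zero_of_X_mul_mem (u := (∏ a, X a) * g ^ (s - t))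
  · intro hu
    have hdvd := X_pow_dvd_aeval_X_of_mem_cyclePathIdeal_pow hu
    simp only [g, map_mul, map_pow, map_prod, aeval_X, prod_const, card_range, card_univ,
      ZMod.card, ← pow_mul, ← pow_add] at hdvd
    rw [pow_dvd_pow_iff Polynomial.X_ne_zero Polynomial.not_isUnit_X, Nat.mul_sub] at hdvd
    have := Nat.mul_le_mul_left m hs
    omega
  · intro i
    rw [← mul_assoc, ← Nat.add_sub_cancel' hs, pow_add, Nat.add_sub_cancel_left]
    exact Ideal.mul_mem_mul (X_mul_prod_univ_X_mem_cyclePathIdeal_pow hn1 i)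
      (Ideal.pow_mem_pow (prod_X_mem_cyclePathIdeal 0) _)
end

section
/- Suppose d = gcd(n,m) = 1. Then for every 1 ≤ i ≤ n, the monomial x_i · (x_1 x_2 ⋯ x_n)^α belongs to J_{n,m}^{t_0}; in particular the maximal graded ideal (x_1,…,x_n) is contained in the colon ideal (J_{n,m}^{t_0} : (x_1⋯x_n)^α). -/
open MvPolynomial

/-!
Since `m * t0 = α * n + 1`, the `m * t0` consecutive variables `x_i, x_{i+1}, …` (indices mod `n`)
wrap around the cycle exactly `α` times and then cover `x_i` once more, so their product is
`x_i * (x_1 ⋯ x_n)^α`. Cutting this window into `t0` blocks of `m` consecutive variables writes it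
as a product of `t0` generators of `J_{n,m}`.
-/

section CyclicWindow

variable {M : Type*} [CommMonoid M] {n : ℕ}

theorem prod_range_comp_add_natCast (f : ZMod n → M) (c : ZMod n) :
    ∏ j ∈ Finset.range n, f (c + j) = ∏ j ∈ Finset.range n, f j := by
  rcases Nat.eq_zero_or_pos n with rfl | hn
  · simp
  have : NeZero n := ⟨hn.ne'⟩
  have prod_eq_prod_univ (c : ZMod n) : ∏ j ∈ Finset.range n, f (c + j) = ∏ z, f z := by
    refine Finset.prod_nbij' (fun j : ℕ => c + j) (fun z => (z - c).val) ?_ ?_ ?_ ?_ ?_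
    · simp
    · exact fun z _ => Finset.mem_range.2 (ZMod.val_lt _)
    · intro j hj
      simp [ZMod.val_cast_of_lt (Finset.mem_range.1 hj)]
    · simp [ZMod.natCast_val]
    · simp
  simpa using (prod_eq_prod_univ c).trans (prod_eq_prod_univ 0).symm

theorem prod_range_mul_comp_add_natCast (f : ZMod n → M) (c : ZMod n) (b : ℕ) :
    ∏ l ∈ Finset.range (b * n), f (c + l) = (∏ j ∈ Finset.range n, f j) ^ b := by
  induction b with
  | zero => simp
  | succ b ih =>
    rw [Nat.succ_mul, Finset.prod_range_add, ih, pow_succ, ← prod_range_comp_add_natCast f c]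
    congr 1
    refine Finset.prod_congr rfl fun l _ => ?_
    simp

theorem prod_range_mul_add_one_comp_add_natCast (f : ZMod n → M) (c : ZMod n) (b : ℕ) :
    ∏ l ∈ Finset.range (b * n + 1), f (c + l) = f c * (∏ j ∈ Finset.range n, f j) ^ b := by
  rw [Finset.prod_range_succ, prod_range_mul_comp_add_natCast, mul_comm]
  simp

end CyclicWindow

section CyclePathIdeal

variable (K : Type*) [Field K] (n m : ℕ)

theorem prod_range_mem_cyclePathIdeal (i : ZMod n) :
    ∏ l ∈ Finset.range m, X (i + l) ∈ cyclePathIdeal K n m :=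
  Ideal.subset_span ⟨i, rfl⟩

theorem prod_range_mul_mem_cyclePathIdeal_pow (i : ZMod n) (k : ℕ) :
    ∏ l ∈ Finset.range (m * k), X (i + l) ∈ cyclePathIdeal K n m ^ k := by
  induction k with
  | zero => simp
  | succ k ih =>
    rw [Nat.mul_succ, Finset.prod_range_add, pow_succ]
    refine Ideal.mul_mem_mul ih ?_
    simpa only [Nat.cast_add, add_assoc] using prod_range_mem_cyclePathIdeal K n m (i + (m * k : ℕ))

end CyclePathIdeal

theorem xi_mul_w_mem_of_gcd_eq_one_general
    (K : Type*) [Field K] (n m : ℕ) (t0 α : ℕ)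
    (ht0 : m * t0 = α * n + 1) :
    (∀ i : ZMod n,
      X i * (∏ j ∈ Finset.range n, X ((j : ℕ) : ZMod n)) ^ α ∈ (cyclePathIdeal K n m) ^ t0) ∧
    maxIdeal K (ZMod n) ≤ ((cyclePathIdeal K n m) ^ t0).colon
      (Ideal.span {((∏ j ∈ Finset.range n, X ((j : ℕ) : ZMod n)) ^ α :
        MvPolynomial (ZMod n) K)}) := by
  have hmem (i : ZMod n) :
      X i * (∏ j ∈ Finset.range n, X ((j : ℕ) : ZMod n)) ^ α ∈ cyclePathIdeal K n m ^ t0 := by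
    rw [← prod_range_mul_add_one_comp_add_natCast, ← ht0]
    exact prod_range_mul_mem_cyclePathIdeal_pow K n m i t0
  refine ⟨hmem, ?_⟩
  rw [maxIdeal, Ideal.span_le]
  rintro _ ⟨i, rfl⟩
  exact Ideal.mem_colon_span_singleton.2 (hmem i)

/-- If `gcd(n,m) = 1`, then for every variable `x_i` the monomial
`x_i ⬝ (x_1 x_2 ⋯ x_n)^α` belongs to `J_{n,m}^{t₀}`; in particular the maximal graded ideal
is contained in the colon ideal `(J_{n,m}^{t₀} : (x_1⋯x_n)^α)`. -/
theorem xi_mul_w_mem_of_gcd_eq_one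
    (K : Type*) [Field K] (n m : ℕ) (hm : 2 ≤ m) (hmn : m < n)
    (hd : Nat.gcd n m = 1) (t0 α : ℕ) (hα : 0 < α) (ht0le : t0 ≤ n - 1)
    (ht0 : m * t0 = α * n + 1)
    (ht0max : ∀ s : ℕ, s ≤ n - 1 → (∃ β : ℕ, 0 < β ∧ m * s = β * n + 1) → s ≤ t0) :
    (∀ i : ZMod n,
      X i * (∏ j ∈ Finset.range n, X ((j : ℕ) : ZMod n)) ^ α ∈ (cyclePathIdeal K n m) ^ t0) ∧
    maxIdeal K (ZMod n) ≤ ((cyclePathIdeal K n m) ^ t0).colon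
      (Ideal.span {((∏ j ∈ Finset.range n, X ((j : ℕ) : ZMod n)) ^ α :
        MvPolynomial (ZMod n) K)}) :=
  xi_mul_w_mem_of_gcd_eq_one_general K n m t0 α ht0
end

section
/- Let d = gcd(n,m) and t ≥ 1. Every minimal monomial generator u = x_1^{a_1} x_2^{a_2} ⋯ x_n^{a_n} of J_{n,m}^t satisfies: for each residue class j ∈ {1,…,d}, the sum of the exponents a_k over all indices k with k ≡ j (mod d) equals tm/d; in particular these d sums are all equal. -/
/-!
A minimal generator `u` of `J^t` is divisible by some product of `t` generators of `J`, which lies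
in `J^t` too, so minimality forces `u` to be such a product. The residue sums are additive in the
exponent vector, and one generator `x_i ⋯ x_{i+m-1}` contributes exactly `m/d` to every class:
its indices are `m` consecutive integers, and `d ∣ m`. Reduction mod `d` is well defined on
indices mod `n` because `d ∣ n`.
-/

open MvPolynomial

open Finset Pointwise

theorem AddMonoidHom.eq_nsmul_of_mem_nsmul {M N : Type*} [AddMonoid M] [AddMonoid N]
    (φ : M →+ N) {S : Set M} {c : N} (hS : ∀ x ∈ S, φ x = c) :
    ∀ {t : ℕ} {x : M}, x ∈ t • S → φ x = t • c
  | 0, x, hx => by rw [zero_nsmul, Set.mem_zero] at hx; simp [hx]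
  | t + 1, x, hx => by
    obtain ⟨y, hy, z, hz, rfl⟩ := Set.mem_add.1 (succ_nsmul S t ▸ hx)
    rw [map_add, eq_nsmul_of_mem_nsmul φ hS hy, hS z hz, succ_nsmul]

theorem Finsupp.degree_strictMono {σ : Type*} : StrictMono (degree : (σ →₀ ℕ) → ℕ) := by
  intro s a h
  obtain ⟨b, rfl⟩ := exists_add_of_le h.le
  have hb : b ≠ 0 := by rintro rfl; simp at h
  rw [map_add]
  exact Nat.lt_add_of_pos_right (Nat.pos_of_ne_zero ((degree_eq_zero_iff b).not.2 hb))

namespace MvPolynomial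

variable {σ R : Type*} [CommSemiring R]

theorem monomial_one_mem_span_monomial_image_iff [Nontrivial R] {a : σ →₀ ℕ}
    {S : Set (σ →₀ ℕ)} :
    monomial a (1 : R) ∈ Ideal.span ((fun s => monomial s (1 : R)) '' S) ↔
      ∃ s ∈ S, s ≤ a := by
  classical
  rw [mem_ideal_span_monomial_image, support_monomial, if_neg one_ne_zero]
  simp

theorem span_monomial_image_pow (S : Set (σ →₀ ℕ)) :
    ∀ t : ℕ, Ideal.span ((fun s => monomial s (1 : R)) '' S) ^ t
      = Ideal.span ((fun s => monomial s (1 : R)) '' (t • S))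
  | 0 => by simp [Ideal.one_eq_top]
  | t + 1 => by
    rw [pow_succ, span_monomial_image_pow S t, Ideal.span_mul_span', succ_nsmul,
      ← Set.image2_add, ← Set.image2_mul, Set.image_image2, Set.image2_image_left,
      Set.image2_image_right]
    simp only [monomial_mul, mul_one]

theorem mem_of_minimal_monomial_mem_span_monomial_image [Nontrivial R] {S : Set (σ →₀ ℕ)}
    {a : σ →₀ ℕ}
    (hmem : monomial a (1 : R) ∈ Ideal.span ((fun s => monomial s (1 : R)) '' S))
    (hmin : ∀ b : σ →₀ ℕ,
      monomial b (1 : R) ∈ Ideal.span ((fun s => monomial s (1 : R)) '' S) →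
      monomial b (1 : R) ∣ monomial a 1 → b.degree < a.degree → False) :
    a ∈ S := by
  obtain ⟨s, hs, hsa⟩ := monomial_one_mem_span_monomial_image_iff.1 hmem
  obtain rfl | hlt := hsa.eq_or_lt
  · exact hs
  · exact (hmin s (Ideal.subset_span ⟨s, hs, rfl⟩)
      (monomial_dvd_monomial.2 ⟨Or.inr hsa, dvd_rfl⟩) (Finsupp.degree_strictMono hlt)).elim

end MvPolynomial

theorem Nat.card_filter_range_add_mod_eq {d m j : ℕ} (hdm : d ∣ m) (hj : j < d) (c : ℕ) :
    #{x ∈ range m | (c + x) % d = j} = m / d := by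
  have hd : 0 < d := by omega
  obtain ⟨q, rfl⟩ := hdm
  have hshift : #{x ∈ range (d * q) | (c + x) % d = j}
      = #{y ∈ Ico c (c + d * q) | y ≡ j [MOD d]} := by
    rw [show Ico c (c + d * q) = (Ico 0 (d * q)).map (addLeftEmbedding c) by
      rw [map_add_left_Ico, add_zero], filter_map, card_map, range_eq_Ico]
    simp [Nat.ModEq, Nat.mod_eq_of_lt hj]
  have hceil : ((c + d * q : ℕ) - j : ℚ) / d = (c - j) / d + q := by
    field_simp; push_cast; ring
  rw [hshift, Nat.mul_div_cancel_left q hd, ← Nat.cast_inj (R := ℤ),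
    Nat.Ico_filter_modEq_card _ _ hd, hceil, Int.ceil_add_natCast]
  simp

theorem ZMod.val_add_natCast_mod_of_dvd {n d : ℕ} [NeZero n] (hdn : d ∣ n) (x : ZMod n)
    (k : ℕ) :
    (x + k).val % d = (x.val + k) % d := by
  rw [ZMod.val_add, ZMod.val_natCast, Nat.mod_mod_of_dvd _ hdn, Nat.add_mod,
    Nat.mod_mod_of_dvd k hdn, ← Nat.add_mod]

noncomputable def cyclePathExponent (n m : ℕ) (i : ZMod n) : ZMod n →₀ ℕ :=
  ∑ k ∈ range m, Finsupp.single (i + k) 1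

theorem cyclePathIdeal_eq_span_monomial (K : Type*) [Field K] (n m : ℕ) :
    cyclePathIdeal K n m
      = Ideal.span ((fun s => monomial s (1 : K)) '' Set.range (cyclePathExponent n m)) := by
  rw [cyclePathIdeal, ← Set.range_comp]
  congr 1
  ext p
  simp [cyclePathExponent, monomial_sum_one, eq_comm, X]

noncomputable def residueSum (n d j : ℕ) : (ZMod n →₀ ℕ) →+ ℕ :=
  ∑ k ∈ range n with k % d = j, Finsupp.applyAddHom (k : ZMod n)

theorem residueSum_apply (n d j : ℕ) (a : ZMod n →₀ ℕ) :
    residueSum n d j a = ∑ k ∈ range n, if k % d = j then a k else 0 := by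
  rw [residueSum, AddMonoidHom.finsetSum_apply, sum_filter]
  rfl

theorem residueSum_single {n : ℕ} [NeZero n] (d j : ℕ) (x : ZMod n) :
    residueSum n d j (Finsupp.single x 1) = if x.val % d = j then 1 else 0 := by
  classical
  have hx : ∀ k ∈ range n,
      (Finsupp.single x 1 (k : ZMod n) : ℕ) = if x.val = k then 1 else 0 := by
    intro k hk
    rw [Finsupp.single_apply]
    refine if_congr ⟨?_, ?_⟩ rfl rfl
    · rintro rfl; rw [ZMod.val_natCast, Nat.mod_eq_of_lt (mem_range.1 hk)]
    · rintro rfl; exact (ZMod.natCast_zmod_val x).symm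
  simp only [residueSum, AddMonoidHom.finsetSum_apply, Finsupp.applyAddHom_apply]
  rw [sum_congr rfl fun k hk => hx k (mem_filter.1 hk).1, sum_ite_eq]
  simp [ZMod.val_lt]

theorem residueSum_cyclePathExponent {n m d j : ℕ} [NeZero n] (hdn : d ∣ n) (hdm : d ∣ m)
    (hj : j < d) (i : ZMod n) : residueSum n d j (cyclePathExponent n m i) = m / d := by
  simp only [cyclePathExponent, map_sum, residueSum_single, ZMod.val_add_natCast_mod_of_dvd hdn]
  rw [← card_filter, Nat.card_filter_range_add_mod_eq hdm hj]

theorem minimal_generator_residue_sums_general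
    (K : Type*) [Field K] (n m t : ℕ) (hmn : m < n)
    (a : ZMod n →₀ ℕ)
    (hmem : (monomial a 1 : MvPolynomial (ZMod n) K) ∈ (cyclePathIdeal K n m) ^ t)
    (hmin : ∀ b : ZMod n →₀ ℕ,
      (monomial b 1 : MvPolynomial (ZMod n) K) ∈ (cyclePathIdeal K n m) ^ t →
      (monomial b 1 : MvPolynomial (ZMod n) K) ∣ (monomial a 1 : MvPolynomial (ZMod n) K) →
      (b.sum fun _ e => e) < (a.sum fun _ e => e) → False) :
    ∀ j < Nat.gcd n m,
      (∑ k ∈ Finset.range n, if k % Nat.gcd n m = j then a ((k : ℕ) : ZMod n) else 0)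
        = t * m / Nat.gcd n m := by
  have : NeZero n := ⟨by omega⟩
  rw [cyclePathIdeal_eq_span_monomial, span_monomial_image_pow] at hmem hmin
  have ha := mem_of_minimal_monomial_mem_span_monomial_image hmem hmin
  intro j hj
  rw [← residueSum_apply, (residueSum n _ j).eq_nsmul_of_mem_nsmul ?_ ha, smul_eq_mul,
    Nat.mul_div_assoc _ (Nat.gcd_dvd_right n m)]
  rintro _ ⟨i, rfl⟩
  exact residueSum_cyclePathExponent (Nat.gcd_dvd_left n m) (Nat.gcd_dvd_right n m) hj i

/-- Every minimal monomial generator `u = x_1^{a_1} ⋯ x_n^{a_n}` of `J_{n,m}^t` satisfies: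
for each residue class `j` modulo `d = gcd(n,m)`, the sum of the exponents `a_k` over the
indices `k ≡ j (mod d)` equals `tm/d`; in particular these `d` sums are all equal. -/
theorem minimal_generator_residue_sums
    (K : Type*) [Field K] (n m t : ℕ) (hm : 2 ≤ m) (hmn : m < n) (ht : 1 ≤ t)
    (a : ZMod n →₀ ℕ)
    (hmem : (monomial a 1 : MvPolynomial (ZMod n) K) ∈ (cyclePathIdeal K n m) ^ t)
    (hmin : ∀ b : ZMod n →₀ ℕ,
      (monomial b 1 : MvPolynomial (ZMod n) K) ∈ (cyclePathIdeal K n m) ^ t →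
      (monomial b 1 : MvPolynomial (ZMod n) K) ∣ (monomial a 1 : MvPolynomial (ZMod n) K) →
      (b.sum fun _ e => e) < (a.sum fun _ e => e) → False) :
    ∀ j < Nat.gcd n m,
      (∑ k ∈ Finset.range n, if k % Nat.gcd n m = j then a ((k : ℕ) : ZMod n) else 0)
        = t * m / Nat.gcd n m :=
  minimal_generator_residue_sums_general K n m t hmn a hmem hmin
end
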